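/- arXiv:2501.17990 — 5 statements merged into one kernel-verified Lean document; each statement's English description precedes it below -/
import Mathlib

section
/- (Ertel's theorem for the inhomogeneous incompressible Euler equations.) Let u : ℝ × ℝ³ → ℝ³, ρ, P : ℝ × ℝ³ → ℝ be smooth and satisfy ρ(∂ₜu + (u·∇)u) = −∇P, div u = 0, ∂ₜρ + u·∇ρ = 0, with ρ > 0 everywhere. Then the potential vorticity q = ω·∇ρ, where ω = curl u, is a material constant: ∂ₜq + u·∇q = 0 pointwise. -/
open MeasureTheory

noncomputable section

/-- Physical space `ℝ³`. -/
abbrev Space : Type := Fin 3 → ℝ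

/-- Time-space points `ℝ × ℝ³`. -/
abbrev Pt : Type := ℝ × Space

/-- Time partial derivative `∂ₜ f`. -/
def tder (f : Pt → ℝ) (x : Pt) : ℝ := fderiv ℝ f x (1, 0)

/-- Spatial partial derivative `∂ᵢ f` in the `i`-th coordinate direction. -/
def pder (i : Fin 3) (f : Pt → ℝ) (x : Pt) : ℝ := fderiv ℝ f x (0, Pi.single i 1)

/-- Spatial gradient `∇f`. -/
def sgrad (f : Pt → ℝ) (x : Pt) : Space := fun i => pder i f x

/-- Spatial divergence `div v`. -/
def sdiv (v : Pt → Space) (x : Pt) : ℝ := ∑ i, pder i (fun y => v y i) x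

/-- Spatial curl `curl v`. -/
def scurl (v : Pt → Space) (x : Pt) : Space :=
  ![pder 1 (fun y => v y 2) x - pder 2 (fun y => v y 1) x,
    pder 2 (fun y => v y 0) x - pder 0 (fun y => v y 2) x,
    pder 0 (fun y => v y 1) x - pder 1 (fun y => v y 0) x]

/-- Euclidean dot product on `ℝ³`. -/
def dot3 (a b : Space) : ℝ := ∑ i, a i * b i

/-- Cross product on `ℝ³`. -/
def cross3 (a b : Space) : Space :=
  ![a 1 * b 2 - a 2 * b 1, a 2 * b 0 - a 0 * b 2, a 0 * b 1 - a 1 * b 0]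

/-- Componentwise time derivative of a vector field. -/
def tderV (v : Pt → Space) (x : Pt) : Space := fun i => tder (fun y => v y i) x

/-- Advective derivative `(u · ∇) v`. -/
def adv (u v : Pt → Space) (x : Pt) : Space :=
  fun i => dot3 (u x) (sgrad (fun y => v y i) x)

/-- `L`-periodicity in each spatial variable (scalar fields). -/
def SPeriodic (L : ℝ) (f : Pt → ℝ) : Prop :=
  ∀ (x : Pt) (i : Fin 3), f (x.1, x.2 + L • (Pi.single i 1 : Space)) = f x

/-- `L`-periodicity in each spatial variable (vector fields). -/
def SPeriodicV (L : ℝ) (v : Pt → Space) : Prop :=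
  ∀ (x : Pt) (i : Fin 3), v (x.1, x.2 + L • (Pi.single i 1 : Space)) = v x

/-- The periodic cell `[0,L]³`. -/
def box (L : ℝ) : Set Space := Set.Icc 0 (fun _ => L)

/-! Auxiliary directional-derivative machinery. -/

def dd (v : Pt) (f : Pt → ℝ) (x : Pt) : ℝ := fderiv ℝ f x v
def ptT : Pt := (1, 0)
def ptS (i : Fin 3) : Pt := (0, Pi.single i 1)

lemma dd_smooth {f : Pt → ℝ} (hf : ContDiff ℝ (⊤ : ℕ∞) f) (v : Pt) : ContDiff ℝ (⊤ : ℕ∞) (dd v f) :=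
  (hf.fderiv_right (by simp)).clm_apply contDiff_const

lemma dd_add {f g : Pt → ℝ} (hf : ContDiff ℝ (⊤ : ℕ∞) f) (hg : ContDiff ℝ (⊤ : ℕ∞) g) (v x) :
    dd v (fun y => f y + g y) x = dd v f x + dd v g x := by
  unfold dd
  rw [fderiv_fun_add (hf.differentiable (by simp) x) (hg.differentiable (by simp) x)]; rfl

lemma dd_mul {f g : Pt → ℝ} (hf : ContDiff ℝ (⊤ : ℕ∞) f) (hg : ContDiff ℝ (⊤ : ℕ∞) g) (v x) :
    dd v (fun y => f y * g y) x = dd v f x * g x + f x * dd v g x := by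
  unfold dd
  rw [fderiv_fun_mul (hf.differentiable (by simp) x) (hg.differentiable (by simp) x)]; simp; ring

lemma dd_sub {f g : Pt → ℝ} (hf : ContDiff ℝ (⊤ : ℕ∞) f) (hg : ContDiff ℝ (⊤ : ℕ∞) g) (v x) :
    dd v (fun y => f y - g y) x = dd v f x - dd v g x := by
  unfold dd
  rw [fderiv_fun_sub (hf.differentiable (by simp) x) (hg.differentiable (by simp) x)]; rfl

lemma dd_comm {f : Pt → ℝ} (hf : ContDiff ℝ (⊤ : ℕ∞) f) (v w x) :
    dd v (dd w f) x = dd w (dd v f) x := by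
  have hs : IsSymmSndFDerivAt ℝ f x := (hf.contDiffAt).isSymmSndFDerivAt (by rw [minSmoothness_of_isRCLikeNormedField]; exact WithTop.coe_le_coe.2 (le_top : (2 : ℕ∞) ≤ ⊤))
  have h1 : ∀ (a b : Pt), dd a (dd b f) x = fderiv ℝ (fderiv ℝ f) x a b := by
    intro a b
    unfold dd
    rw [fderiv_clm_apply ((hf.fderiv_right (m := (⊤ : ℕ∞)) (by simp)).differentiable (by simp) x)
      (differentiableAt_const b)]
    simp
  rw [h1 v w, h1 w v]
  exact hs v w

lemma dd_zero_fun {f : Pt → ℝ} (hf : ∀ y, f y = 0) (v x) : dd v f x = 0 := by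
  have : f = fun _ => (0 : ℝ) := funext hf
  rw [this]; unfold dd; simp

/-- Ertel's theorem: for the inhomogeneous incompressible Euler
equations the potential vorticity `q = ω·∇ρ` is a material constant:
`∂ₜq + u·∇q = 0`. -/
theorem ertel_theorem_iie
    (u : Pt → Space) (ρ P : Pt → ℝ)
    (hu : ContDiff ℝ (⊤ : ℕ∞) u) (hρ : ContDiff ℝ (⊤ : ℕ∞) ρ) (hP : ContDiff ℝ (⊤ : ℕ∞) P)
    (hmom : ∀ x : Pt, ρ x • (tderV u x + adv u u x) = -sgrad P x)
    (hdiv : ∀ x : Pt, sdiv u x = 0)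
    (hmass : ∀ x : Pt, tder ρ x + dot3 (u x) (sgrad ρ x) = 0)
    (hρpos : ∀ x : Pt, 0 < ρ x)
    (x : Pt) :
    tder (fun y => dot3 (scurl u y) (sgrad ρ y)) x
      + dot3 (u x) (sgrad (fun y => dot3 (scurl u y) (sgrad ρ y)) x) = 0 := by
  have sC : ∀ i : Fin 3, ContDiff ℝ (⊤ : ℕ∞) (fun z => u z i) := fun i => contDiff_pi.1 hu i
  have s0 := sC 0
  have s1 := sC 1
  have s2 := sC 2
  -- rewrite the potential vorticity into dd-form
  have hq : (fun y => dot3 (scurl u y) (sgrad ρ y)) = (fun y =>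
      (dd (ptS 1) (fun z => u z 2) y - dd (ptS 2) (fun z => u z 1) y) * dd (ptS 0) ρ y
      + (dd (ptS 2) (fun z => u z 0) y - dd (ptS 0) (fun z => u z 2) y) * dd (ptS 1) ρ y
      + (dd (ptS 0) (fun z => u z 1) y - dd (ptS 1) (fun z => u z 0) y) * dd (ptS 2) ρ y) := by
    funext y
    simp [dot3, scurl, sgrad, pder, dd, ptS, Fin.sum_univ_three,
      Matrix.cons_val_zero, Matrix.cons_val_one, Matrix.head_cons]
  -- smoothness pieces
  have w0s : ContDiff ℝ (⊤ : ℕ∞) (fun y => dd (ptS 1) (fun z => u z 2) y - dd (ptS 2) (fun z => u z 1) y) :=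
    (dd_smooth s2 _).sub (dd_smooth s1 _)
  have w1s : ContDiff ℝ (⊤ : ℕ∞) (fun y => dd (ptS 2) (fun z => u z 0) y - dd (ptS 0) (fun z => u z 2) y) :=
    (dd_smooth s0 _).sub (dd_smooth s2 _)
  have w2s : ContDiff ℝ (⊤ : ℕ∞) (fun y => dd (ptS 0) (fun z => u z 1) y - dd (ptS 1) (fun z => u z 0) y) :=
    (dd_smooth s1 _).sub (dd_smooth s0 _)
  have g0s : ContDiff ℝ (⊤ : ℕ∞) (dd (ptS 0) ρ) := dd_smooth hρ _
  have g1s : ContDiff ℝ (⊤ : ℕ∞) (dd (ptS 1) ρ) := dd_smooth hρ _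
  have g2s : ContDiff ℝ (⊤ : ℕ∞) (dd (ptS 2) ρ) := dd_smooth hρ _
  -- derivative of q in any direction
  have hQ : ∀ v : Pt, dd v (fun y =>
      (dd (ptS 1) (fun z => u z 2) y - dd (ptS 2) (fun z => u z 1) y) * dd (ptS 0) ρ y
      + (dd (ptS 2) (fun z => u z 0) y - dd (ptS 0) (fun z => u z 2) y) * dd (ptS 1) ρ y
      + (dd (ptS 0) (fun z => u z 1) y - dd (ptS 1) (fun z => u z 0) y) * dd (ptS 2) ρ y) x =
      (dd v (dd (ptS 1) (fun z => u z 2)) x - dd v (dd (ptS 2) (fun z => u z 1)) x) * dd (ptS 0) ρ x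
      + (dd (ptS 1) (fun z => u z 2) x - dd (ptS 2) (fun z => u z 1) x) * dd v (dd (ptS 0) ρ) x
      + (dd v (dd (ptS 2) (fun z => u z 0)) x - dd v (dd (ptS 0) (fun z => u z 2)) x) * dd (ptS 1) ρ x
      + (dd (ptS 2) (fun z => u z 0) x - dd (ptS 0) (fun z => u z 2) x) * dd v (dd (ptS 1) ρ) x
      + (dd v (dd (ptS 0) (fun z => u z 1)) x - dd v (dd (ptS 1) (fun z => u z 0)) x) * dd (ptS 2) ρ x
      + (dd (ptS 0) (fun z => u z 1) x - dd (ptS 1) (fun z => u z 0) x) * dd v (dd (ptS 2) ρ) x := by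
    intro v
    rw [dd_add ((w0s.mul g0s).add (w1s.mul g1s)) (w2s.mul g2s),
      dd_add (w0s.mul g0s) (w1s.mul g1s),
      dd_mul w0s g0s, dd_mul w1s g1s, dd_mul w2s g2s,
      dd_sub (dd_smooth s2 (ptS 1)) (dd_smooth s1 (ptS 2)),
      dd_sub (dd_smooth s0 (ptS 2)) (dd_smooth s2 (ptS 0)),
      dd_sub (dd_smooth s1 (ptS 0)) (dd_smooth s0 (ptS 1))]
    ring
  -- mass equation, differentiated in space
  have hz : ∀ y : Pt, dd ptT ρ y + (u y 0 * dd (ptS 0) ρ y + u y 1 * dd (ptS 1) ρ y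
      + u y 2 * dd (ptS 2) ρ y) = 0 := by
    intro y
    have h1 := hmass y
    simp only [dot3, sgrad, tder, pder, Fin.sum_univ_three] at h1
    simp only [dd, ptT, ptS]
    linarith [h1]
  have hD : ∀ k : Fin 3,
      dd (ptS k) (dd ptT ρ) x
      + (dd (ptS k) (fun z => u z 0) x * dd (ptS 0) ρ x + u x 0 * dd (ptS k) (dd (ptS 0) ρ) x
        + (dd (ptS k) (fun z => u z 1) x * dd (ptS 1) ρ x + u x 1 * dd (ptS k) (dd (ptS 1) ρ) x)
        + (dd (ptS k) (fun z => u z 2) x * dd (ptS 2) ρ x + u x 2 * dd (ptS k) (dd (ptS 2) ρ) x)) = 0 := by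
    intro k
    have h0 : dd (ptS k) (fun y => dd ptT ρ y + (u y 0 * dd (ptS 0) ρ y + u y 1 * dd (ptS 1) ρ y
        + u y 2 * dd (ptS 2) ρ y)) x = 0 := dd_zero_fun hz _ _
    rw [dd_add (dd_smooth hρ ptT)
        (((s0.mul g0s).add (s1.mul g1s)).add (s2.mul g2s)),
      dd_add ((s0.mul g0s).add (s1.mul g1s)) (s2.mul g2s),
      dd_add (s0.mul g0s) (s1.mul g1s),
      dd_mul s0 g0s, dd_mul s1 g1s, dd_mul s2 g2s] at h0
    linarith [h0]
  -- momentum equation componentwise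
  have hA : ∀ (i : Fin 3) (y : Pt),
      ρ y * (dd ptT (fun z => u z i) y + (u y 0 * dd (ptS 0) (fun z => u z i) y
        + u y 1 * dd (ptS 1) (fun z => u z i) y + u y 2 * dd (ptS 2) (fun z => u z i) y))
      + dd (ptS i) P y = 0 := by
    intro i y
    have h1 := congrFun (hmom y) i
    simp only [tderV, adv, dot3, sgrad, tder, pder, Fin.sum_univ_three, Pi.smul_apply,
      Pi.add_apply, Pi.neg_apply, smul_eq_mul] at h1
    simp only [dd, ptT, ptS]
    linarith [h1]
  -- momentum equation, differentiated in space
  have hM : ∀ k i : Fin 3,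
      dd (ptS k) ρ x * (dd ptT (fun z => u z i) x + (u x 0 * dd (ptS 0) (fun z => u z i) x
        + u x 1 * dd (ptS 1) (fun z => u z i) x + u x 2 * dd (ptS 2) (fun z => u z i) x))
      + ρ x * (dd (ptS k) (dd ptT (fun z => u z i)) x
        + (dd (ptS k) (fun z => u z 0) x * dd (ptS 0) (fun z => u z i) x
            + u x 0 * dd (ptS k) (dd (ptS 0) (fun z => u z i)) x
          + (dd (ptS k) (fun z => u z 1) x * dd (ptS 1) (fun z => u z i) x
            + u x 1 * dd (ptS k) (dd (ptS 1) (fun z => u z i)) x)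
          + (dd (ptS k) (fun z => u z 2) x * dd (ptS 2) (fun z => u z i) x
            + u x 2 * dd (ptS k) (dd (ptS 2) (fun z => u z i)) x)))
      + dd (ptS k) (dd (ptS i) P) x = 0 := by
    intro k i
    have sAi : ContDiff ℝ (⊤ : ℕ∞) (fun y => dd ptT (fun z => u z i) y
        + (u y 0 * dd (ptS 0) (fun z => u z i) y + u y 1 * dd (ptS 1) (fun z => u z i) y
          + u y 2 * dd (ptS 2) (fun z => u z i) y)) :=
      (dd_smooth (sC i) ptT).add (((s0.mul (dd_smooth (sC i) (ptS 0))).add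
        (s1.mul (dd_smooth (sC i) (ptS 1)))).add (s2.mul (dd_smooth (sC i) (ptS 2))))
    have h0 : dd (ptS k) (fun y => ρ y * (dd ptT (fun z => u z i) y
        + (u y 0 * dd (ptS 0) (fun z => u z i) y + u y 1 * dd (ptS 1) (fun z => u z i) y
          + u y 2 * dd (ptS 2) (fun z => u z i) y)) + dd (ptS i) P y) x = 0 :=
      dd_zero_fun (hA i) _ _
    rw [dd_add (hρ.mul sAi) (dd_smooth hP (ptS i)),
      dd_mul hρ sAi,
      dd_add (dd_smooth (sC i) ptT) (((s0.mul (dd_smooth (sC i) (ptS 0))).add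
        (s1.mul (dd_smooth (sC i) (ptS 1)))).add (s2.mul (dd_smooth (sC i) (ptS 2)))),
      dd_add ((s0.mul (dd_smooth (sC i) (ptS 0))).add (s1.mul (dd_smooth (sC i) (ptS 1))))
        (s2.mul (dd_smooth (sC i) (ptS 2))),
      dd_add (s0.mul (dd_smooth (sC i) (ptS 0))) (s1.mul (dd_smooth (sC i) (ptS 1))),
      dd_mul s0 (dd_smooth (sC i) (ptS 0)), dd_mul s1 (dd_smooth (sC i) (ptS 1)),
      dd_mul s2 (dd_smooth (sC i) (ptS 2))] at h0
    linarith [h0]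
  -- instantiate
  have hD0 := hD 0; have hD1 := hD 1; have hD2 := hD 2
  have hM01 := hM 0 1; have hM10 := hM 1 0
  have hM02 := hM 0 2; have hM20 := hM 2 0
  have hM12 := hM 1 2; have hM21 := hM 2 1
  -- Schwarz canonicalization
  have sw : ∀ (f : Pt → ℝ), ContDiff ℝ (⊤ : ℕ∞) f → ∀ v w : Pt, dd v (dd w f) x = dd w (dd v f) x :=
    fun f hf v w => dd_comm hf v w x
  -- rewrite goal
  rw [hq]
  simp only [dot3, sgrad, Fin.sum_univ_three,
    show tder = dd ptT from rfl, show pder = (fun i => dd (ptS i)) from rfl]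
  simp only [hQ]
  simp only [sw _ (sC 0) (ptS 1) (ptS 0), sw _ (sC 0) (ptS 2) (ptS 0), sw _ (sC 0) (ptS 2) (ptS 1),
    sw _ (sC 1) (ptS 1) (ptS 0), sw _ (sC 1) (ptS 2) (ptS 0), sw _ (sC 1) (ptS 2) (ptS 1),
    sw _ (sC 2) (ptS 1) (ptS 0), sw _ (sC 2) (ptS 2) (ptS 0), sw _ (sC 2) (ptS 2) (ptS 1),
    sw _ hρ (ptS 1) (ptS 0), sw _ hρ (ptS 2) (ptS 0), sw _ hρ (ptS 2) (ptS 1),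
    sw _ hP (ptS 1) (ptS 0), sw _ hP (ptS 2) (ptS 0), sw _ hP (ptS 2) (ptS 1),
    sw _ (sC 0) (ptS 0) ptT, sw _ (sC 0) (ptS 1) ptT, sw _ (sC 0) (ptS 2) ptT,
    sw _ (sC 1) (ptS 0) ptT, sw _ (sC 1) (ptS 1) ptT, sw _ (sC 1) (ptS 2) ptT,
    sw _ (sC 2) (ptS 0) ptT, sw _ (sC 2) (ptS 1) ptT, sw _ (sC 2) (ptS 2) ptT,
    sw _ hρ (ptS 0) ptT, sw _ hρ (ptS 1) ptT, sw _ hρ (ptS 2) ptT]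
    at hD0 hD1 hD2 hM01 hM10 hM02 hM20 hM12 hM21 ⊢
  have hdx : dd (ptS 0) (fun z => u z 0) x + dd (ptS 1) (fun z => u z 1) x
      + dd (ptS 2) (fun z => u z 2) x = 0 := by
    have h1 := hdiv x
    simp only [sdiv, pder, Fin.sum_univ_three] at h1
    simp only [dd, ptS]
    linarith [h1]
  have hR : ρ x ≠ 0 := ne_of_gt (hρpos x)
  refine mul_left_cancel₀ hR ?_
  linear_combination
    (ρ x * (dd (ptS 1) (fun z => u z 2) x - dd (ptS 2) (fun z => u z 1) x)) * hD0
    + (ρ x * (dd (ptS 2) (fun z => u z 0) x - dd (ptS 0) (fun z => u z 2) x)) * hD1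
    + (ρ x * (dd (ptS 0) (fun z => u z 1) x - dd (ptS 1) (fun z => u z 0) x)) * hD2
    + dd (ptS 0) ρ x * hM12 - dd (ptS 0) ρ x * hM21
    + dd (ptS 1) ρ x * hM20 - dd (ptS 1) ρ x * hM02
    + dd (ptS 2) ρ x * hM01 - dd (ptS 2) ρ x * hM10
    - (ρ x * (dd (ptS 0) ρ x * (dd (ptS 1) (fun z => u z 2) x - dd (ptS 2) (fun z => u z 1) x)
        + dd (ptS 1) ρ x * (dd (ptS 2) (fun z => u z 0) x - dd (ptS 0) (fun z => u z 2) x)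
        + dd (ptS 2) ρ x * (dd (ptS 0) (fun z => u z 1) x - dd (ptS 1) (fun z => u z 0) x))) * hdx
end
end

section
/- Let u : ℝ × ℝ³ → ℝ³, ρ, P : ℝ × ℝ³ → ℝ be smooth and satisfy the inhomogeneous incompressible Euler equations ρ(∂ₜu + (u·∇)u) = −∇P, div u = 0, ∂ₜρ + u·∇ρ = 0, with ρ > 0 everywhere. Then the helicity density h_ρ = (ρu)·(ρω), with ω = curl u, satisfies the pointwise entropy-type relation ∂ₜh_ρ + div J_ρ = σ_ρ, where J_ρ = h_ρ u + P curl(ρu) − ½ ρ² |u|² ω and σ_ρ = −q ρ |u|², with q = ω·∇ρ the potential vorticity. -/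
open MeasureTheory

noncomputable section

/-! ### Auxiliary derivative machinery -/

/-- Directional derivative along a fixed vector. -/
def der (v : Pt) (f : Pt → ℝ) (x : Pt) : ℝ := fderiv ℝ f x v

/-- Time direction. -/
def et : Pt := (1, (0 : Space))

/-- Spatial directions. -/
def ex (i : Fin 3) : Pt := ((0 : ℝ), Pi.single i 1)

lemma tder_eq (f : Pt → ℝ) : tder f = der et f := rfl
lemma pder_eq (i : Fin 3) (f : Pt → ℝ) : pder i f = der (ex i) f := rfl

@[fun_prop]
lemma ContDiff.der' {f : Pt → ℝ} (hf : ContDiff ℝ (⊤ : ℕ∞) f) (v : Pt) :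
    ContDiff ℝ (⊤ : ℕ∞) (der v f) :=
  ((hf.fderiv_right (by simp)).clm_apply contDiff_const :
    ContDiff ℝ (⊤ : ℕ∞) (fun y => (fderiv ℝ f y) v))

lemma der_comm {f : Pt → ℝ} (hf : ContDiff ℝ (⊤ : ℕ∞) f) (v w : Pt) (x : Pt) :
    der v (der w f) x = der w (der v f) x := by
  have hdf : Differentiable ℝ f := hf.differentiable (by simp)
  have hdf' : DifferentiableAt ℝ (fderiv ℝ f) x :=
    ((hf.fderiv_right (m := (⊤ : ℕ∞)) (by simp)).differentiable (by simp)) x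
  have key : ∀ a b : Pt, der a (der b f) x = fderiv ℝ (fderiv ℝ f) x a b := by
    intro a b
    show fderiv ℝ (fun y => fderiv ℝ f y b) x a = _
    have : fderiv ℝ (fun y => (fderiv ℝ f y) b) x
        = (fderiv ℝ f x).comp (fderiv ℝ (fun _ : Pt => b) x)
          + (fderiv ℝ (fderiv ℝ f) x).flip b :=
      fderiv_clm_apply hdf' (differentiableAt_const b)
    simp [this]
  rw [key, key]
  exact (second_derivative_symmetric (fun y => (hdf y).hasFDerivAt)
    hdf'.hasFDerivAt w v).symm

section rules
variable {f g : Pt → ℝ} (v x : Pt)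

lemma der_add (hf : ContDiff ℝ (⊤ : ℕ∞) f) (hg : ContDiff ℝ (⊤ : ℕ∞) g) :
    der v (fun y => f y + g y) x = der v f x + der v g x := by
  simp [der, fderiv_fun_add ((hf.differentiable (by simp)) x) ((hg.differentiable (by simp)) x)]

lemma der_mul (hf : ContDiff ℝ (⊤ : ℕ∞) f) (hg : ContDiff ℝ (⊤ : ℕ∞) g) :
    der v (fun y => f y * g y) x = f x * der v g x + der v f x * g x := by
  simp only [der, fderiv_fun_mul ((hf.differentiable (by simp)) x) ((hg.differentiable (by simp)) x),
    ContinuousLinearMap.add_apply, ContinuousLinearMap.smul_apply, smul_eq_mul]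
  ring

lemma der_sub (hf : ContDiff ℝ (⊤ : ℕ∞) f) (hg : ContDiff ℝ (⊤ : ℕ∞) g) :
    der v (fun y => f y - g y) x = der v f x - der v g x := by
  simp [der, fderiv_fun_sub ((hf.differentiable (by simp)) x) ((hg.differentiable (by simp)) x)]

lemma der_neg : der v (fun y => -f y) x = -der v f x := by simp [der]

lemma der_const (c : ℝ) : der v (fun _ => c) x = 0 := by simp [der]

lemma der_const_mul (hf : ContDiff ℝ (⊤ : ℕ∞) f) (c : ℝ) :
    der v (fun y => c * f y) x = c * der v f x := by
  simp [der, fderiv_const_mul ((hf.differentiable (by simp)) x)]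

end rules

set_option maxHeartbeats 4000000 in
/-- entropy-type relation for the helicity density
`h_ρ = (ρu)·(ρω)` for the inhomogeneous incompressible Euler equations:
`∂ₜh_ρ + div J_ρ = σ_ρ` with `J_ρ = h_ρ u + P curl(ρu) − ½ρ²|u|² ω` and
`σ_ρ = −q ρ |u|²`. -/
theorem helicity_entropy_relation_iie
    (u : Pt → Space) (ρ P : Pt → ℝ)
    (hu : ContDiff ℝ (⊤ : ℕ∞) u) (hρ : ContDiff ℝ (⊤ : ℕ∞) ρ) (hP : ContDiff ℝ (⊤ : ℕ∞) P)
    (hmom : ∀ x : Pt, ρ x • (tderV u x + adv u u x) = -sgrad P x)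
    (hdiv : ∀ x : Pt, sdiv u x = 0)
    (hmass : ∀ x : Pt, tder ρ x + dot3 (u x) (sgrad ρ x) = 0)
    (hρpos : ∀ x : Pt, 0 < ρ x)
    (x : Pt) :
    tder (fun y => dot3 (ρ y • u y) (ρ y • scurl u y)) x
      + sdiv (fun y =>
          dot3 (ρ y • u y) (ρ y • scurl u y) • u y
          + P y • scurl (fun z => ρ z • u z) y
          - ((1/2) * (ρ y)^2 * dot3 (u y) (u y)) • scurl u y) x
      = -(dot3 (scurl u x) (sgrad ρ x)) * ρ x * dot3 (u x) (u x) := by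
  have hc0 : ContDiff ℝ (⊤ : ℕ∞) (fun y => u y 0) := contDiff_pi.1 hu 0
  have hc1 : ContDiff ℝ (⊤ : ℕ∞) (fun y => u y 1) := contDiff_pi.1 hu 1
  have hc2 : ContDiff ℝ (⊤ : ℕ∞) (fun y => u y 2) := contDiff_pi.1 hu 2
  -- momentum equation, componentwise, in `der` form
  have hMom : ∀ (i : Fin 3) (y : Pt),
      ρ y * (der et (fun z => u z i) y
        + (u y 0 * der (ex 0) (fun z => u z i) y
          + u y 1 * der (ex 1) (fun z => u z i) y
          + u y 2 * der (ex 2) (fun z => u z i) y))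
      + der (ex i) P y = 0 := by
    intro i y
    have h := congrFun (hmom y) i
    simp only [tderV, adv, sgrad, dot3, Fin.sum_univ_three, Pi.smul_apply, Pi.add_apply,
      Pi.neg_apply, smul_eq_mul, tder_eq, pder_eq] at h
    linarith
  -- derivatives of the momentum equation
  have hM : ∀ (i : Fin 3) (v : Pt),
      der v (fun y => ρ y * (der et (fun z => u z i) y
        + (u y 0 * der (ex 0) (fun z => u z i) y
          + u y 1 * der (ex 1) (fun z => u z i) y
          + u y 2 * der (ex 2) (fun z => u z i) y))
      + der (ex i) P y) x = 0 := by
    intro i v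
    have h : (fun y => ρ y * (der et (fun z => u z i) y
        + (u y 0 * der (ex 0) (fun z => u z i) y
          + u y 1 * der (ex 1) (fun z => u z i) y
          + u y 2 * der (ex 2) (fun z => u z i) y))
      + der (ex i) P y) = (fun _ => (0:ℝ)) := funext (hMom i)
    rw [h]
    simp [der]
  -- mass equation in `der` form at x
  have hSx : der et ρ x + (u x 0 * der (ex 0) ρ x + u x 1 * der (ex 1) ρ x
      + u x 2 * der (ex 2) ρ x) = 0 := by
    have h := hmass x
    simp only [dot3, sgrad, Fin.sum_univ_three, tder_eq, pder_eq] at h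
    linarith
  have hM0 := hMom 0 x
  have hM1 := hMom 1 x
  have hM2 := hMom 2 x
  have hD1M0 := hM 0 (ex 1)
  have hD2M0 := hM 0 (ex 2)
  have hD0M1 := hM 1 (ex 0)
  have hD2M1 := hM 1 (ex 2)
  have hD0M2 := hM 2 (ex 0)
  have hD1M2 := hM 2 (ex 1)
  simp (disch := fun_prop) only [der_mul, der_add, der_sub, der_neg, der_const,
    der_const_mul] at hD1M0 hD2M0 hD0M1 hD2M1 hD0M2 hD1M2
  simp only [der_comm hρ (ex 0) et, der_comm hρ (ex 1) et, der_comm hρ (ex 2) et,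
    der_comm hρ (ex 1) (ex 0), der_comm hρ (ex 2) (ex 0), der_comm hρ (ex 2) (ex 1),
    der_comm hP (ex 0) et, der_comm hP (ex 1) et, der_comm hP (ex 2) et,
    der_comm hP (ex 1) (ex 0), der_comm hP (ex 2) (ex 0), der_comm hP (ex 2) (ex 1),
    der_comm hc0 (ex 0) et, der_comm hc0 (ex 1) et, der_comm hc0 (ex 2) et,
    der_comm hc0 (ex 1) (ex 0), der_comm hc0 (ex 2) (ex 0), der_comm hc0 (ex 2) (ex 1),
    der_comm hc1 (ex 0) et, der_comm hc1 (ex 1) et, der_comm hc1 (ex 2) et,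
    der_comm hc1 (ex 1) (ex 0), der_comm hc1 (ex 2) (ex 0), der_comm hc1 (ex 2) (ex 1),
    der_comm hc2 (ex 0) et, der_comm hc2 (ex 1) et, der_comm hc2 (ex 2) et,
    der_comm hc2 (ex 1) (ex 0), der_comm hc2 (ex 2) (ex 0), der_comm hc2 (ex 2) (ex 1)]
    at hD1M0 hD2M0 hD0M1 hD2M1 hD0M2 hD1M2
  -- expand the goal
  simp only [dot3, scurl, sgrad, sdiv, Fin.sum_univ_three, Pi.smul_apply, Pi.add_apply,
    Pi.sub_apply, smul_eq_mul, Matrix.cons_val_zero, Matrix.cons_val_one,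
    Matrix.cons_val_two, Matrix.cons_val_succ, Matrix.head_cons, Matrix.tail_cons,
    Matrix.vecHead, Matrix.vecTail, Function.comp_apply, pow_two, tder_eq, pder_eq]
  simp (disch := fun_prop) only [der_mul, der_add, der_sub, der_neg, der_const,
    der_const_mul]
  simp only [der_comm hρ (ex 0) et, der_comm hρ (ex 1) et, der_comm hρ (ex 2) et,
    der_comm hρ (ex 1) (ex 0), der_comm hρ (ex 2) (ex 0), der_comm hρ (ex 2) (ex 1),
    der_comm hP (ex 0) et, der_comm hP (ex 1) et, der_comm hP (ex 2) et,
    der_comm hP (ex 1) (ex 0), der_comm hP (ex 2) (ex 0), der_comm hP (ex 2) (ex 1),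
    der_comm hc0 (ex 0) et, der_comm hc0 (ex 1) et, der_comm hc0 (ex 2) et,
    der_comm hc0 (ex 1) (ex 0), der_comm hc0 (ex 2) (ex 0), der_comm hc0 (ex 2) (ex 1),
    der_comm hc1 (ex 0) et, der_comm hc1 (ex 1) et, der_comm hc1 (ex 2) et,
    der_comm hc1 (ex 1) (ex 0), der_comm hc1 (ex 2) (ex 0), der_comm hc1 (ex 2) (ex 1),
    der_comm hc2 (ex 0) et, der_comm hc2 (ex 1) et, der_comm hc2 (ex 2) et,
    der_comm hc2 (ex 1) (ex 0), der_comm hc2 (ex 2) (ex 0), der_comm hc2 (ex 2) (ex 1)]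
  linear_combination (norm := ring1)
    (-(ρ x * u x 2)) * hD1M0 + (ρ x * u x 1) * hD2M0
    + (ρ x * u x 2) * hD0M1 + (-(ρ x * u x 0)) * hD2M1
    + (-(ρ x * u x 1)) * hD0M2 + (ρ x * u x 0) * hD1M2
    + (ρ x * der (ex 1) (fun y => u y 2) x - ρ x * der (ex 2) (fun y => u y 1) x
       + u x 2 * der (ex 1) ρ x - u x 1 * der (ex 2) ρ x) * hM0
    + (ρ x * der (ex 2) (fun y => u y 0) x - ρ x * der (ex 0) (fun y => u y 2) x
       + u x 0 * der (ex 2) ρ x - u x 2 * der (ex 0) ρ x) * hM1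
    + (ρ x * der (ex 0) (fun y => u y 1) x - ρ x * der (ex 1) (fun y => u y 0) x
       + u x 1 * der (ex 0) ρ x - u x 0 * der (ex 1) ρ x) * hM2
    + (2 * ρ x * (u x 0 * (der (ex 1) (fun y => u y 2) x - der (ex 2) (fun y => u y 1) x)
       + u x 1 * (der (ex 2) (fun y => u y 0) x - der (ex 0) (fun y => u y 2) x)
       + u x 2 * (der (ex 0) (fun y => u y 1) x - der (ex 1) (fun y => u y 0) x))) * hSx
end
end

section
/- Let L > 0 and let u : ℝ × ℝ³ → ℝ³, ρ, P : ℝ × ℝ³ → ℝ be smooth, L-periodic in each of the three spatial variables, and satisfy the inhomogeneous incompressible Euler equations ρ(∂ₜu + (u·∇)u) = −∇P, div u = 0, ∂ₜρ + u·∇ρ = 0, with ρ > 0 everywhere. Define H(t) = ∫_{[0,L]³} (ρu)·(ρω) dx with ω = curl u, the potential vorticity q = ω·∇ρ, and 𝓔₀ = ½ ρ |u|². Then for every t, dH/dt = −2 ∫_{[0,L]³} q 𝓔₀ dx. -/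
open MeasureTheory

noncomputable section

lemma contDiff_dir {f : Pt → ℝ} (hf : ContDiff ℝ (⊤ : ℕ∞) f) (v : Pt) :
    ContDiff ℝ (⊤ : ℕ∞) (fun x => fderiv ℝ f x v) :=
  (hf.fderiv_right (n := (⊤ : ℕ∞)) (by simp)).clm_apply contDiff_const

lemma contDiff_pder {f : Pt → ℝ} (hf : ContDiff ℝ (⊤ : ℕ∞) f) (i : Fin 3) :
    ContDiff ℝ (⊤ : ℕ∞) (pder i f) := contDiff_dir hf _

lemma contDiff_tder {f : Pt → ℝ} (hf : ContDiff ℝ (⊤ : ℕ∞) f) :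
    ContDiff ℝ (⊤ : ℕ∞) (tder f) := contDiff_dir hf _

lemma snd_swap {f : Pt → ℝ} (hf : ContDiff ℝ (⊤ : ℕ∞) f) (x : Pt) (v w : Pt) :
    fderiv ℝ (fun y => fderiv ℝ f y v) x w = fderiv ℝ (fun y => fderiv ℝ f y w) x v := by
  have hsymm := (hf.contDiffAt (x := x)).isSymmSndFDerivAt (by rw [minSmoothness_of_isRCLikeNormedField]; exact WithTop.coe_le_coe.mpr le_top)
  have hd : DifferentiableAt ℝ (fderiv ℝ f) x :=
    ((hf.fderiv_right (n := (⊤ : ℕ∞)) (m := 1) (WithTop.coe_le_coe.mpr le_top)).differentiable (by simp)).differentiableAt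
  have h1 : ∀ a : Pt, fderiv ℝ (fun y => fderiv ℝ f y a) x
      = (fderiv ℝ (fderiv ℝ f) x).flip a := by
    intro a
    have := fderiv_clm_apply (c := fderiv ℝ f) (u := fun _ => a) hd (differentiableAt_const a)
    simpa using this
  rw [h1 v, h1 w]
  simpa using hsymm.eq w v


-- product/add/sub rules
lemma pder_mul {f g : Pt → ℝ} (hf : DifferentiableAt ℝ f x) (hg : DifferentiableAt ℝ g x)
    (i : Fin 3) : pder i (fun y => f y * g y) x = pder i f x * g x + f x * pder i g x := by
  unfold pder; rw [fderiv_fun_mul hf hg]; simp; ring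

lemma tder_mul {f g : Pt → ℝ} (hf : DifferentiableAt ℝ f x) (hg : DifferentiableAt ℝ g x) :
    tder (fun y => f y * g y) x = tder f x * g x + f x * tder g x := by
  unfold tder; rw [fderiv_fun_mul hf hg]; simp; ring

lemma pder_add {f g : Pt → ℝ} (hf : DifferentiableAt ℝ f x) (hg : DifferentiableAt ℝ g x)
    (i : Fin 3) : pder i (fun y => f y + g y) x = pder i f x + pder i g x := by
  unfold pder; rw [fderiv_fun_add hf hg]; simp

lemma tder_add {f g : Pt → ℝ} (hf : DifferentiableAt ℝ f x) (hg : DifferentiableAt ℝ g x) :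
    tder (fun y => f y + g y) x = tder f x + tder g x := by
  unfold tder; rw [fderiv_fun_add hf hg]; simp

lemma pder_sub {f g : Pt → ℝ} (hf : DifferentiableAt ℝ f x) (hg : DifferentiableAt ℝ g x)
    (i : Fin 3) : pder i (fun y => f y - g y) x = pder i f x - pder i g x := by
  unfold pder; rw [fderiv_fun_sub hf hg]; simp

lemma tder_sub {f g : Pt → ℝ} (hf : DifferentiableAt ℝ f x) (hg : DifferentiableAt ℝ g x) :
    tder (fun y => f y - g y) x = tder f x - tder g x := by
  unfold tder; rw [fderiv_fun_sub hf hg]; simp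

lemma pder_neg {f : Pt → ℝ} (i : Fin 3) :
    pder i (fun y => -f y) x = - pder i f x := by
  unfold pder; rw [fderiv_fun_neg]; simp

lemma tder_neg {f : Pt → ℝ} : tder (fun y => -f y) x = - tder f x := by
  unfold tder; rw [fderiv_fun_neg]; simp

lemma pder_const (c : ℝ) (i : Fin 3) (x : Pt) : pder i (fun _ => c) x = 0 := by
  unfold pder; simp

lemma tder_const (c : ℝ) (x : Pt) : tder (fun _ => c) x = 0 := by
  unfold tder; simp

lemma pder_const_mul {f : Pt → ℝ} (hf : DifferentiableAt ℝ f x) (c : ℝ) (i : Fin 3) :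
    pder i (fun y => c * f y) x = c * pder i f x := by
  unfold pder; rw [fderiv_const_mul hf]; simp

lemma tder_const_mul {f : Pt → ℝ} (hf : DifferentiableAt ℝ f x) (c : ℝ) :
    tder (fun y => c * f y) x = c * tder f x := by
  unfold tder; rw [fderiv_const_mul hf]; simp


lemma pder_pder_comm {f : Pt → ℝ} (hf : ContDiff ℝ (⊤ : ℕ∞) f) (i j : Fin 3) (x : Pt) :
    pder i (pder j f) x = pder j (pder i f) x := by
  unfold pder; exact snd_swap hf x _ _

lemma tder_pder_comm {f : Pt → ℝ} (hf : ContDiff ℝ (⊤ : ℕ∞) f) (j : Fin 3) (x : Pt) :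
    tder (pder j f) x = pder j (tder f) x := by
  unfold pder tder; exact snd_swap hf x _ _

lemma fderiv_periodic_shift {f : Pt → ℝ} (hf : ContDiff ℝ (⊤ : ℕ∞) f) {L : ℝ}
    (hper : SPeriodic L f) (x : Pt) (j : Fin 3) (v : Pt) :
    fderiv ℝ f (x.1, x.2 + L • (Pi.single j 1 : Space)) v = fderiv ℝ f x v := by
  set c : Pt := ((0:ℝ), L • (Pi.single j 1 : Space)) with hc
  have hcomp : (fun y : Pt => f (y + c)) = f := by
    funext y
    have hyc : y + c = (y.1, y.2 + L • (Pi.single j 1 : Space)) := by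
      simp [hc, Prod.ext_iff]
    rw [hyc]; exact hper y j
  have h1 : fderiv ℝ (fun y : Pt => f (y + c)) x = fderiv ℝ f (x + c) := by
    have hd : HasFDerivAt (fun y : Pt => f (y + c)) (fderiv ℝ f (x + c)) x := by
      have h2 : HasFDerivAt (fun y : Pt => y + c) (ContinuousLinearMap.id ℝ Pt) x :=
        (hasFDerivAt_id x).add_const c
      have h3 : HasFDerivAt f (fderiv ℝ f (x + c)) (x + c) :=
        (hf.differentiable (by simp) (x + c)).hasFDerivAt
      simpa [Function.comp_def] using h3.comp x h2
    exact hd.fderiv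
  have hx : x + c = (x.1, x.2 + L • (Pi.single j 1 : Space)) := by
    simp [hc, Prod.ext_iff]
  rw [← hx, ← h1, hcomp]

lemma SPeriodic.pder {f : Pt → ℝ} (hf : ContDiff ℝ (⊤ : ℕ∞) f) {L : ℝ}
    (hper : SPeriodic L f) (i : Fin 3) : SPeriodic L (pder i f) := by
  intro x j; exact fderiv_periodic_shift hf hper x j _

-- slice lemmas
lemma hasDerivAt_slice {f : Pt → ℝ} (hf : ContDiff ℝ (⊤ : ℕ∞) f) (s : ℝ) (y : Space) :
    HasDerivAt (fun r => f (r, y)) (tder f (s, y)) s := by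
  have hd : HasFDerivAt f (fderiv ℝ f (s, y)) (s, y) :=
    (hf.differentiable (by simp) (s, y)).hasFDerivAt
  have hline : HasDerivAt (fun r : ℝ => ((r, y) : Pt)) ((1:ℝ), (0:Space)) s := by
    simpa using (HasDerivAt.prodMk (hasDerivAt_id s) (hasDerivAt_const s y))
  have := hd.comp_hasDerivAt s hline
  simpa [tder, Function.comp_def] using this

/-- Differentiation under the integral sign over the compact box. -/
lemma hasDerivAt_integral_box {f : Pt → ℝ} (hf : ContDiff ℝ (⊤ : ℕ∞) f) (L t : ℝ) :
    HasDerivAt (fun s => ∫ x in box L, f (s, x)) (∫ x in box L, tder f (t, x)) t := by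
  have hcompact : IsCompact (box L) := isCompact_Icc
  have hKc : IsCompact ((Set.Icc (t-1) (t+1)) ×ˢ box L) := isCompact_Icc.prod hcompact
  have hcont : Continuous (tder f) := (contDiff_tder hf).continuous
  obtain ⟨C, hC⟩ := hKc.exists_bound_of_continuousOn hcont.continuousOn
  have key := hasDerivAt_integral_of_dominated_loc_of_deriv_le
    (F := fun s x => f (s, x)) (F' := fun s x => tder f (s, x))
    (μ := volume.restrict (box L)) (x₀ := t) (bound := fun _ => C)
    (s := Metric.ball t 1) (Metric.ball_mem_nhds t one_pos)
    (Filter.Eventually.of_forall fun s =>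
      ((hf.continuous.comp (continuous_const.prodMk continuous_id)).aestronglyMeasurable))
    (((hf.continuous.comp (continuous_const.prodMk continuous_id)).continuousOn).integrableOn_compact hcompact)
    ((hcont.comp (continuous_const.prodMk continuous_id)).aestronglyMeasurable)
    ?_ ?_ ?_
  · exact key.2
  · rw [show box L = Set.Icc 0 (fun _ => L) from rfl,
      MeasureTheory.ae_restrict_iff' measurableSet_Icc]
    refine Filter.Eventually.of_forall fun x hx => fun s hs => ?_
    refine hC (s, x) ?_
    constructor
    · have := Metric.mem_ball.mp hs
      rw [Real.dist_eq] at this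
      constructor <;> [linarith [neg_abs_le (s - t)]; linarith [le_abs_self (s - t)]]
    · exact hx
  · exact (integrableOn_const hcompact.measure_lt_top.ne)
  · exact Filter.Eventually.of_forall fun x => fun s _ => hasDerivAt_slice hf s x


lemma pder_slice {f : Pt → ℝ} (hf : ContDiff ℝ (⊤ : ℕ∞) f) (t : ℝ) (y : Space) (i : Fin 3) :
    HasFDerivAt (fun z : Space => f (t, z))
      ((fderiv ℝ f (t, y)).comp (ContinuousLinearMap.inr ℝ ℝ Space)) y := by
  have hd : HasFDerivAt f (fderiv ℝ f (t, y)) (t, y) :=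
    (hf.differentiable (by simp) (t, y)).hasFDerivAt
  exact hd.comp y (HasFDerivAt.prodMk (hasFDerivAt_const t y) (hasFDerivAt_id y))

lemma insertNth_shift (L : ℝ) (i : Fin 3) (y : Fin 2 → ℝ) :
    (Fin.insertNth i L y : Fin 3 → ℝ)
      = Fin.insertNth i 0 y + L • (Pi.single i 1 : Space) := by
  funext j
  refine Fin.succAboveCases i ?_ (fun m => ?_) j
  · simp [Pi.single_eq_same]
  · simp [Fin.insertNth_apply_succAbove, Pi.single_eq_of_ne (Fin.succAbove_ne i m)]

/-- Integral of the spatial divergence of a smooth periodic field over the box vanishes. -/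
lemma integral_sdiv_box_eq_zero {L : ℝ} (hL : 0 < L) (v : Pt → Space)
    (hv : ∀ k, ContDiff ℝ (⊤ : ℕ∞) (fun y => v y k)) (hper : SPeriodicV L v) (t : ℝ) :
    ∫ x in box L, sdiv v (t, x) = 0 := by
  classical
  set g : Space → Space := fun z => v (t, z) with hg
  set g' : Space → (Space →L[ℝ] Space) := fun z =>
    ContinuousLinearMap.pi (fun k =>
      (fderiv ℝ (fun y : Pt => v y k) (t, z)).comp (ContinuousLinearMap.inr ℝ ℝ Space)) with hg'
  have hle : (0 : Fin 3 → ℝ) ≤ (fun _ => L) := fun i => hL.le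
  have hderiv : ∀ z : Space, HasFDerivAt g (g' z) z := by
    intro z
    apply hasFDerivAt_pi''
    intro k
    exact pder_slice (hv k) t z k
  have hdiv_eq : ∀ z : Space, (∑ i, g' z (Pi.single i 1) i) = sdiv v (t, z) := by
    intro z
    unfold sdiv pder
    refine Finset.sum_congr rfl fun i _ => ?_
    simp [hg', ContinuousLinearMap.pi_apply]
  have hcont : Continuous g := by
    have : Continuous (fun z : Space => (((t, z)) : Pt)) := continuous_const.prodMk continuous_id
    exact continuous_pi fun k => ((hv k).continuous).comp this
  have hint : IntegrableOn (fun z => ∑ i, g' z (Pi.single i 1) i) (Set.Icc 0 (fun _ => L)) := by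
    have : Continuous fun z : Space => sdiv v (t, z) := by
      have : ∀ i : Fin 3, Continuous fun z : Space => pder i (fun y => v y i) (t, z) := by
        intro i
        exact ((contDiff_dir (hv i) _).continuous).comp (continuous_const.prodMk continuous_id)
      exact continuous_finset_sum _ fun i _ => this i
    refine ((this.congr ?_).continuousOn).integrableOn_compact isCompact_Icc
    intro z; exact (hdiv_eq z).symm
  have key := MeasureTheory.integral_divergence_of_hasFDerivAt_off_countable
    (a := (0 : Fin 3 → ℝ)) (b := fun _ => L) hle g g' ∅ Set.countable_empty
    hcont.continuousOn (fun x _ => hderiv x) hint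
  have hfaces : ∀ i : Fin 3,
      ((∫ x in Set.Icc ((0 : Fin 3 → ℝ) ∘ i.succAbove) ((fun _ => L) ∘ i.succAbove),
          g (Fin.insertNth i ((fun _ => L) i) x) i)
        - ∫ x in Set.Icc ((0 : Fin 3 → ℝ) ∘ i.succAbove) ((fun _ => L) ∘ i.succAbove),
          g (Fin.insertNth i ((0 : Fin 3 → ℝ) i) x) i) = 0 := by
    intro i
    have : ∀ x : Fin 2 → ℝ, g (Fin.insertNth i ((fun _ => L) i) x) i
        = g (Fin.insertNth i ((0 : Fin 3 → ℝ) i) x) i := by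
      intro x
      have h1 : (Fin.insertNth i ((fun _ => L) i) x : Fin 3 → ℝ)
          = Fin.insertNth i ((0 : Fin 3 → ℝ) i) x + L • (Pi.single i 1 : Space) := by
        simpa using insertNth_shift L i x
      rw [h1, hg]
      have := hper (t, Fin.insertNth i ((0 : Fin 3 → ℝ) i) x) i
      exact congrFun this i
    simp only [this, sub_self]
  rw [show box L = Set.Icc (0 : Fin 3 → ℝ) (fun _ => L) from rfl]
  calc ∫ x in Set.Icc (0 : Fin 3 → ℝ) (fun _ => L), sdiv v (t, x)
      = ∫ x in Set.Icc (0 : Fin 3 → ℝ) (fun _ => L), ∑ i, g' x (Pi.single i 1) i := by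
        refine setIntegral_congr_fun measurableSet_Icc fun z _ => (hdiv_eq z).symm
    _ = 0 := by rw [key]; exact Finset.sum_eq_zero fun i _ => hfaces i


def hden (u : Pt → Space) (ρ : Pt → ℝ) : Pt → ℝ := fun y => dot3 (ρ y • u y) (ρ y • scurl u y)
def flux (u : Pt → Space) (ρ P : Pt → ℝ) : Pt → Space := fun y =>
  (hden u ρ y) • u y
  - (((1:ℝ)/2) * (ρ y * ρ y * dot3 (u y) (u y))) • scurl u y
  - (P y) • cross3 (u y) (sgrad ρ y)
  + (P y * ρ y) • scurl u y
lemma hden_def (u : Pt → Space) (ρ : Pt → ℝ) :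
    hden u ρ = fun y => dot3 (ρ y • u y) (ρ y • scurl u y) := rfl
lemma flux_def (u : Pt → Space) (ρ P : Pt → ℝ) :
    flux u ρ P = fun y =>
      (hden u ρ y) • u y
      - (((1:ℝ)/2) * (ρ y * ρ y * dot3 (u y) (u y))) • scurl u y
      - (P y) • cross3 (u y) (sgrad ρ y)
      + (P y * ρ y) • scurl u y := rfl

lemma contDiff_hden {u : Pt → Space} {ρ : Pt → ℝ}
    (hu : ContDiff ℝ (⊤ : ℕ∞) u) (hρ : ContDiff ℝ (⊤ : ℕ∞) ρ) : ContDiff ℝ (⊤ : ℕ∞) (hden u ρ) := by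
  have huk : ∀ k, ContDiff ℝ (⊤ : ℕ∞) (fun y => u y k) := fun k => contDiff_pi.mp hu k
  have hduk : ∀ i k, ContDiff ℝ (⊤ : ℕ∞) (pder i (fun y => u y k)) :=
    fun i k => contDiff_pder (huk k) i
  rw [hden_def]
  simp only [dot3, scurl, Pi.smul_apply, smul_eq_mul, Fin.sum_univ_three, Matrix.cons_val_zero,
    Matrix.cons_val_one, Matrix.head_cons, Matrix.cons_val_two, Matrix.tail_cons]
  fun_prop

lemma contDiff_flux {u : Pt → Space} {ρ P : Pt → ℝ}
    (hu : ContDiff ℝ (⊤ : ℕ∞) u) (hρ : ContDiff ℝ (⊤ : ℕ∞) ρ) (hP : ContDiff ℝ (⊤ : ℕ∞) P) (k : Fin 3) :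
    ContDiff ℝ (⊤ : ℕ∞) (fun y => flux u ρ P y k) := by
  have huk : ∀ k, ContDiff ℝ (⊤ : ℕ∞) (fun y => u y k) := fun k => contDiff_pi.mp hu k
  have hduk : ∀ i k, ContDiff ℝ (⊤ : ℕ∞) (pder i (fun y => u y k)) :=
    fun i k => contDiff_pder (huk k) i
  have hdρ : ∀ i, ContDiff ℝ (⊤ : ℕ∞) (pder i ρ) := fun i => contDiff_pder hρ i
  have hh : ContDiff ℝ (⊤ : ℕ∞) (hden u ρ) := contDiff_hden hu hρ
  fin_cases k <;>
  · simp [flux, hden_def, dot3, scurl, cross3, sgrad, Fin.sum_univ_three, Pi.smul_apply, smul_eq_mul, Matrix.vecHead, Matrix.vecTail]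
    fun_prop
lemma flux_periodic {u : Pt → Space} {ρ P : Pt → ℝ} {L : ℝ}
    (hu : ContDiff ℝ (⊤ : ℕ∞) u) (hρ : ContDiff ℝ (⊤ : ℕ∞) ρ) (hP : ContDiff ℝ (⊤ : ℕ∞) P)
    (hperu : SPeriodicV L u) (hperρ : SPeriodic L ρ) (hperP : SPeriodic L P) :
    SPeriodicV L (flux u ρ P) := by
  have huk : ∀ k, ContDiff ℝ (⊤ : ℕ∞) (fun y => u y k) := fun k => contDiff_pi.mp hu k
  have puk : ∀ k, SPeriodic L (fun y => u y k) := fun k x i => congrFun (hperu x i) k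
  intro x i
  have e1 : ∀ k : Fin 3, u (x.1, x.2 + L • (Pi.single i 1 : Space)) k = u x k :=
    fun k => congrFun (hperu x i) k
  have e2 : ρ (x.1, x.2 + L • (Pi.single i 1 : Space)) = ρ x := hperρ x i
  have e3 : P (x.1, x.2 + L • (Pi.single i 1 : Space)) = P x := hperP x i
  have e4 : ∀ (j k : Fin 3), pder j (fun y => u y k) (x.1, x.2 + L • (Pi.single i 1 : Space))
      = pder j (fun y => u y k) x :=
    fun j k => (SPeriodic.pder (huk k) (puk k) j) x i
  have e5 : ∀ j : Fin 3, pder j ρ (x.1, x.2 + L • (Pi.single i 1 : Space)) = pder j ρ x :=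
    fun j => (SPeriodic.pder hρ hperρ j) x i
  funext k
  simp only [flux, hden_def, dot3, scurl, cross3, sgrad, Pi.add_apply, Pi.sub_apply,
    Pi.smul_apply, smul_eq_mul, Fin.sum_univ_three, e1, e2, e3, e4, e5]


set_option maxHeartbeats 2000000 in
/-- The key pointwise identity. -/
lemma key_identity (u : Pt → Space) (ρ P : Pt → ℝ)
    (hu : ContDiff ℝ (⊤ : ℕ∞) u) (hρ : ContDiff ℝ (⊤ : ℕ∞) ρ) (hP : ContDiff ℝ (⊤ : ℕ∞) P)
    (hmom : ∀ x : Pt, ρ x • (tderV u x + adv u u x) = -sgrad P x)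
    (hmass : ∀ x : Pt, tder ρ x + dot3 (u x) (sgrad ρ x) = 0)
    (x : Pt) :
    tder (hden u ρ) x
      = - sdiv (flux u ρ P) x
        - 2 * (dot3 (scurl u x) (sgrad ρ x) * ((1/2) * ρ x * dot3 (u x) (u x))) := by
  have huk : ∀ k, ContDiff ℝ (⊤ : ℕ∞) (fun y => u y k) := fun k => contDiff_pi.mp hu k
  have dρ : Differentiable ℝ ρ := hρ.differentiable (by simp)
  have dP : Differentiable ℝ P := hP.differentiable (by simp)
  have duk : ∀ k, Differentiable ℝ (fun y => u y k) := fun k => (huk k).differentiable (by simp)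
  have dduk : ∀ i k, Differentiable ℝ (pder i (fun y => u y k)) :=
    fun i k => (contDiff_pder (huk k) i).differentiable (by simp)
  have ddρ : ∀ i, Differentiable ℝ (pder i ρ) :=
    fun i => (contDiff_pder hρ i).differentiable (by simp)
  have ddP : ∀ i, Differentiable ℝ (pder i P) :=
    fun i => (contDiff_pder hP i).differentiable (by simp)
  have dtuk : ∀ k, Differentiable ℝ (tder (fun y => u y k)) :=
    fun k => (contDiff_tder (huk k)).differentiable (by simp)
  -- symmetry of second derivatives, sorted instances
  have tsym : ∀ (j k : Fin 3),
      tder (pder j (fun y => u y k)) x = pder j (tder (fun y => u y k)) x :=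
    fun j k => tder_pder_comm (huk k) j x
  have sρ10 : pder 1 (pder 0 ρ) x = pder 0 (pder 1 ρ) x :=
    pder_pder_comm hρ 1 0 x
  have sP10 : pder 1 (pder 0 P) x = pder 0 (pder 1 P) x :=
    pder_pder_comm hP 1 0 x
  have su10 : ∀ k, pder 1 (pder 0 (fun y => u y k)) x
      = pder 0 (pder 1 (fun y => u y k)) x :=
    fun k => pder_pder_comm (huk k) 1 0 x
  have sρ20 : pder 2 (pder 0 ρ) x = pder 0 (pder 2 ρ) x :=
    pder_pder_comm hρ 2 0 x
  have sP20 : pder 2 (pder 0 P) x = pder 0 (pder 2 P) x :=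
    pder_pder_comm hP 2 0 x
  have su20 : ∀ k, pder 2 (pder 0 (fun y => u y k)) x
      = pder 0 (pder 2 (fun y => u y k)) x :=
    fun k => pder_pder_comm (huk k) 2 0 x
  have sρ21 : pder 2 (pder 1 ρ) x = pder 1 (pder 2 ρ) x :=
    pder_pder_comm hρ 2 1 x
  have sP21 : pder 2 (pder 1 P) x = pder 1 (pder 2 P) x :=
    pder_pder_comm hP 2 1 x
  have su21 : ∀ k, pder 2 (pder 1 (fun y => u y k)) x
      = pder 1 (pder 2 (fun y => u y k)) x :=
    fun k => pder_pder_comm (huk k) 2 1 x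
  -- expanded equations
  have ems : tder ρ x + (u x 0 * pder 0 ρ x + u x 1 * pder 1 ρ x + u x 2 * pder 2 ρ x) = 0 := by
    have h := hmass x
    simp only [dot3, sgrad, Fin.sum_univ_three] at h
    linarith
  have hmomf : ∀ (k : Fin 3) (y : Pt), ρ y * (tder (fun z => u z k) y + (u y 0 * pder 0 (fun z => u z k) y + u y 1 * pder 1 (fun z => u z k) y + u y 2 * pder 2 (fun z => u z k) y)) + pder k P y = 0 := by
    intro k y
    have h := congrFun (hmom y) k
    simp only [tderV, adv, sgrad, dot3, Pi.smul_apply, Pi.add_apply, Pi.neg_apply,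
      smul_eq_mul, Fin.sum_univ_three] at h
    linarith
  have hmomfun : ∀ k : Fin 3, (fun y : Pt => ρ y * (tder (fun z => u z k) y + (u y 0 * pder 0 (fun z => u z k) y + u y 1 * pder 1 (fun z => u z k) y + u y 2 * pder 2 (fun z => u z k) y)) + pder k P y) = (fun _ => (0:ℝ)) :=
    fun k => funext (hmomf k)
  have edm00 : pder 0 (fun y : Pt => ρ y * (tder (fun z => u z 0) y + (u y 0 * pder 0 (fun z => u z 0) y + u y 1 * pder 1 (fun z => u z 0) y + u y 2 * pder 2 (fun z => u z 0) y)) + pder 0 P y) x = 0 := by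
    rw [hmomfun 0]; exact pder_const 0 0 x
  simp (disch := fun_prop) only [pder_mul, pder_add, pder_sub, pder_neg, pder_const_mul,
    pder_const] at edm00
  try simp only [sρ10, sρ20, sρ21, sP10, sP20, sP21, su10, su20, su21] at edm00
  have edm01 : pder 0 (fun y : Pt => ρ y * (tder (fun z => u z 1) y + (u y 0 * pder 0 (fun z => u z 1) y + u y 1 * pder 1 (fun z => u z 1) y + u y 2 * pder 2 (fun z => u z 1) y)) + pder 1 P y) x = 0 := by
    rw [hmomfun 1]; exact pder_const 0 0 x
  simp (disch := fun_prop) only [pder_mul, pder_add, pder_sub, pder_neg, pder_const_mul,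
    pder_const] at edm01
  try simp only [sρ10, sρ20, sρ21, sP10, sP20, sP21, su10, su20, su21] at edm01
  have edm02 : pder 0 (fun y : Pt => ρ y * (tder (fun z => u z 2) y + (u y 0 * pder 0 (fun z => u z 2) y + u y 1 * pder 1 (fun z => u z 2) y + u y 2 * pder 2 (fun z => u z 2) y)) + pder 2 P y) x = 0 := by
    rw [hmomfun 2]; exact pder_const 0 0 x
  simp (disch := fun_prop) only [pder_mul, pder_add, pder_sub, pder_neg, pder_const_mul,
    pder_const] at edm02
  try simp only [sρ10, sρ20, sρ21, sP10, sP20, sP21, su10, su20, su21] at edm02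
  have edm10 : pder 1 (fun y : Pt => ρ y * (tder (fun z => u z 0) y + (u y 0 * pder 0 (fun z => u z 0) y + u y 1 * pder 1 (fun z => u z 0) y + u y 2 * pder 2 (fun z => u z 0) y)) + pder 0 P y) x = 0 := by
    rw [hmomfun 0]; exact pder_const 0 1 x
  simp (disch := fun_prop) only [pder_mul, pder_add, pder_sub, pder_neg, pder_const_mul,
    pder_const] at edm10
  try simp only [sρ10, sρ20, sρ21, sP10, sP20, sP21, su10, su20, su21] at edm10
  have edm11 : pder 1 (fun y : Pt => ρ y * (tder (fun z => u z 1) y + (u y 0 * pder 0 (fun z => u z 1) y + u y 1 * pder 1 (fun z => u z 1) y + u y 2 * pder 2 (fun z => u z 1) y)) + pder 1 P y) x = 0 := by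
    rw [hmomfun 1]; exact pder_const 0 1 x
  simp (disch := fun_prop) only [pder_mul, pder_add, pder_sub, pder_neg, pder_const_mul,
    pder_const] at edm11
  try simp only [sρ10, sρ20, sρ21, sP10, sP20, sP21, su10, su20, su21] at edm11
  have edm12 : pder 1 (fun y : Pt => ρ y * (tder (fun z => u z 2) y + (u y 0 * pder 0 (fun z => u z 2) y + u y 1 * pder 1 (fun z => u z 2) y + u y 2 * pder 2 (fun z => u z 2) y)) + pder 2 P y) x = 0 := by
    rw [hmomfun 2]; exact pder_const 0 1 x
  simp (disch := fun_prop) only [pder_mul, pder_add, pder_sub, pder_neg, pder_const_mul,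
    pder_const] at edm12
  try simp only [sρ10, sρ20, sρ21, sP10, sP20, sP21, su10, su20, su21] at edm12
  have edm20 : pder 2 (fun y : Pt => ρ y * (tder (fun z => u z 0) y + (u y 0 * pder 0 (fun z => u z 0) y + u y 1 * pder 1 (fun z => u z 0) y + u y 2 * pder 2 (fun z => u z 0) y)) + pder 0 P y) x = 0 := by
    rw [hmomfun 0]; exact pder_const 0 2 x
  simp (disch := fun_prop) only [pder_mul, pder_add, pder_sub, pder_neg, pder_const_mul,
    pder_const] at edm20
  try simp only [sρ10, sρ20, sρ21, sP10, sP20, sP21, su10, su20, su21] at edm20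
  have edm21 : pder 2 (fun y : Pt => ρ y * (tder (fun z => u z 1) y + (u y 0 * pder 0 (fun z => u z 1) y + u y 1 * pder 1 (fun z => u z 1) y + u y 2 * pder 2 (fun z => u z 1) y)) + pder 1 P y) x = 0 := by
    rw [hmomfun 1]; exact pder_const 0 2 x
  simp (disch := fun_prop) only [pder_mul, pder_add, pder_sub, pder_neg, pder_const_mul,
    pder_const] at edm21
  try simp only [sρ10, sρ20, sρ21, sP10, sP20, sP21, su10, su20, su21] at edm21
  have edm22 : pder 2 (fun y : Pt => ρ y * (tder (fun z => u z 2) y + (u y 0 * pder 0 (fun z => u z 2) y + u y 1 * pder 1 (fun z => u z 2) y + u y 2 * pder 2 (fun z => u z 2) y)) + pder 2 P y) x = 0 := by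
    rw [hmomfun 2]; exact pder_const 0 2 x
  simp (disch := fun_prop) only [pder_mul, pder_add, pder_sub, pder_neg, pder_const_mul,
    pder_const] at edm22
  try simp only [sρ10, sρ20, sρ21, sP10, sP20, sP21, su10, su20, su21] at edm22
  -- expand the goal
  simp only [hden_def, hden, flux_def, flux, sdiv, sgrad, scurl, dot3, cross3, Pi.add_apply, Pi.sub_apply,
    Pi.smul_apply, smul_eq_mul, Fin.sum_univ_three, Matrix.cons_val_zero, Matrix.cons_val_one,
    Matrix.head_cons, Matrix.cons_val_two, Matrix.tail_cons]
  simp (disch := fun_prop) only [pder_mul, pder_add, pder_sub, pder_neg, pder_const_mul,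
    pder_const, tder_mul, tder_add, tder_sub, tder_neg, tder_const_mul, tder_const]
  simp only [tsym, sρ10, sρ20, sρ21, su10, su20, su21]
  linear_combination
    (2 * (ρ x) * (u x 0 * (pder 1 (fun y => u y 2) x - pder 2 (fun y => u y 1) x) + u x 1 * (pder 2 (fun y => u y 0) x - pder 0 (fun y => u y 2) x) + u x 2 * (pder 0 (fun y => u y 1) x - pder 1 (fun y => u y 0) x))) * ems + (ρ x * (pder 1 (fun y => u y 2) x - pder 2 (fun y => u y 1) x) + pder 1 ρ x * u x 2 - pder 2 ρ x * u x 1) * (hmomf 0 x) + (ρ x * (pder 2 (fun y => u y 0) x - pder 0 (fun y => u y 2) x) + pder 2 ρ x * u x 0 - pder 0 ρ x * u x 2) * (hmomf 1 x) + (ρ x * (pder 0 (fun y => u y 1) x - pder 1 (fun y => u y 0) x) + pder 0 ρ x * u x 1 - pder 1 ρ x * u x 0) * (hmomf 2 x) + (ρ x * u x 0) * edm12 + (-(ρ x * u x 0)) * edm21 + (ρ x * u x 1) * edm20 + (-(ρ x * u x 1)) * edm02 + (ρ x * u x 2) * edm01 + (-(ρ x * u x 2)) * edm10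


/-- for the inhomogeneous incompressible Euler equations on a
periodic cell, the helicity `H(t) = ∫ (ρu)·(ρω) dx` satisfies
`dH/dt = −2 ∫ q 𝓔₀ dx`. -/
theorem helicity_growth_iie
    (L : ℝ) (hL : 0 < L) (u : Pt → Space) (ρ P : Pt → ℝ)
    (hu : ContDiff ℝ (⊤ : ℕ∞) u) (hρ : ContDiff ℝ (⊤ : ℕ∞) ρ) (hP : ContDiff ℝ (⊤ : ℕ∞) P)
    (hperu : SPeriodicV L u) (hperρ : SPeriodic L ρ) (hperP : SPeriodic L P)
    (hmom : ∀ x : Pt, ρ x • (tderV u x + adv u u x) = -sgrad P x)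
    (hdiv : ∀ x : Pt, sdiv u x = 0)
    (hmass : ∀ x : Pt, tder ρ x + dot3 (u x) (sgrad ρ x) = 0)
    (hρpos : ∀ x : Pt, 0 < ρ x)
    (H : ℝ → ℝ)
    (hH : H = fun t => ∫ x in box L, dot3 (ρ (t, x) • u (t, x)) (ρ (t, x) • scurl u (t, x)))
    (t : ℝ) :
    deriv H t = -2 * ∫ x in box L,
      dot3 (scurl u (t, x)) (sgrad ρ (t, x))
        * ((1/2) * ρ (t, x) * dot3 (u (t, x)) (u (t, x))) := by
  subst hH
  have hsm : ContDiff ℝ (⊤ : ℕ∞) (hden u ρ) := contDiff_hden hu hρ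
  have hfl : ∀ k, ContDiff ℝ (⊤ : ℕ∞) (fun y => flux u ρ P y k) := contDiff_flux hu hρ hP
  have hper : SPeriodicV L (flux u ρ P) := flux_periodic hu hρ hP hperu hperρ hperP
  have hbox : IsCompact (box L) := isCompact_Icc
  have mbox : MeasurableSet (box L) := measurableSet_Icc
  have cdiv : Continuous (fun z : Space => sdiv (flux u ρ P) (t, z)) := by
    have h : ∀ i : Fin 3, Continuous fun z : Space =>
        pder i (fun y => flux u ρ P y i) (t, z) := by
      intro i
      exact ((contDiff_pder (hfl i) i).continuous).comp (continuous_const.prodMk continuous_id)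
    exact continuous_finset_sum Finset.univ fun i _ => h i
  have cg : Continuous (fun z : Space => dot3 (scurl u (t, z)) (sgrad ρ (t, z))
      * ((1/2) * ρ (t, z) * dot3 (u (t, z)) (u (t, z)))) := by
    have huk : ∀ k, ContDiff ℝ (⊤ : ℕ∞) (fun y => u y k) := fun k => contDiff_pi.mp hu k
    have c1 : ∀ i k : Fin 3, Continuous (pder i (fun y => u y k)) :=
      fun i k => (contDiff_pder (huk k) i).continuous
    have c2 : ∀ i : Fin 3, Continuous (pder i ρ) := fun i => (contDiff_pder hρ i).continuous
    have c3 : Continuous u := hu.continuous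
    have c4 : Continuous ρ := hρ.continuous
    simp only [dot3, scurl, sgrad, Fin.sum_univ_three, Matrix.cons_val_zero, Matrix.cons_val_one,
      Matrix.head_cons, Matrix.cons_val_two, Matrix.tail_cons]
    fun_prop
  have hint1 : IntegrableOn (fun z : Space => - sdiv (flux u ρ P) (t, z)) (box L) :=
    (cdiv.neg.continuousOn).integrableOn_compact hbox
  have hint2 : IntegrableOn (fun z : Space => 2 * (dot3 (scurl u (t, z)) (sgrad ρ (t, z))
      * ((1/2) * ρ (t, z) * dot3 (u (t, z)) (u (t, z))))) (box L) :=
    ((continuous_const.mul cg).continuousOn).integrableOn_compact hbox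
  have hkey : ∀ z : Space, tder (hden u ρ) (t, z)
      = - sdiv (flux u ρ P) (t, z) - 2 * (dot3 (scurl u (t, z)) (sgrad ρ (t, z))
          * ((1/2) * ρ (t, z) * dot3 (u (t, z)) (u (t, z)))) :=
    fun z => key_identity u ρ P hu hρ hP hmom hmass (t, z)
  have h1 : deriv (fun s => ∫ x in box L,
        dot3 (ρ (s, x) • u (s, x)) (ρ (s, x) • scurl u (s, x))) t
      = ∫ x in box L, tder (hden u ρ) (t, x) :=
    (hasDerivAt_integral_box hsm L t).deriv
  have h2 : ∫ x in box L, tder (hden u ρ) (t, x)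
      = ∫ x in box L, (- sdiv (flux u ρ P) (t, x) - 2 * (dot3 (scurl u (t, x)) (sgrad ρ (t, x))
          * ((1/2) * ρ (t, x) * dot3 (u (t, x)) (u (t, x))))) :=
    setIntegral_congr_fun mbox fun z _ => hkey z
  have h3 : ∫ x in box L, (- sdiv (flux u ρ P) (t, x) - 2 * (dot3 (scurl u (t, x)) (sgrad ρ (t, x))
          * ((1/2) * ρ (t, x) * dot3 (u (t, x)) (u (t, x)))))
      = (∫ x in box L, - sdiv (flux u ρ P) (t, x))
        - ∫ x in box L, 2 * (dot3 (scurl u (t, x)) (sgrad ρ (t, x))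
          * ((1/2) * ρ (t, x) * dot3 (u (t, x)) (u (t, x)))) :=
    integral_sub hint1 hint2
  have h4 : ∫ x in box L, - sdiv (flux u ρ P) (t, x)
      = - ∫ x in box L, sdiv (flux u ρ P) (t, x) := integral_neg _
  have h5 : ∫ x in box L, sdiv (flux u ρ P) (t, x) = 0 :=
    integral_sdiv_box_eq_zero hL (flux u ρ P) hfl hper t
  have h6 : ∫ x in box L, 2 * (dot3 (scurl u (t, x)) (sgrad ρ (t, x))
        * ((1/2) * ρ (t, x) * dot3 (u (t, x)) (u (t, x))))
      = 2 * ∫ x in box L, dot3 (scurl u (t, x)) (sgrad ρ (t, x))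
        * ((1/2) * ρ (t, x) * dot3 (u (t, x)) (u (t, x))) :=
    integral_const_mul 2 _
  rw [h1, h2, h3, h4, h5, h6]
  ring
end
end

section
/- Let u : ℝ × ℝ³ → ℝ³, ρ, P : ℝ × ℝ³ → ℝ be smooth with ρ > 0 everywhere, satisfying the compressible Euler equations ρ(∂ₜu + (u·∇)u) = −∇P and ∂ₜρ + u·∇ρ + ρ div u = 0. Then the helicity density h_ρ = (ρu)·(ρω), with ω = curl u, satisfies the pointwise entropy-type relation ∂ₜh_ρ + div J_ρ = σ̃_ρ, where J_ρ = h_ρ u + P curl(ρu) − ½ ρ² |u|² ω, σ̃_ρ = −q ρ |u|² − 2 h_ρ div u, and q = ω·∇ρ. -/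
open MeasureTheory

noncomputable section

section Helpers

@[fun_prop]
lemma sm_fd {f : Pt → ℝ} (hf : ContDiff ℝ (⊤ : ℕ∞) f) (v : Pt) :
    ContDiff ℝ (⊤ : ℕ∞) (fun y => fderiv ℝ f y v) :=
  (hf.fderiv_right (by simp)).clm_apply contDiff_const

lemma sm_comp {u : Pt → Space} (hu : ContDiff ℝ (⊤ : ℕ∞) u) (i : Fin 3) :
    ContDiff ℝ (⊤ : ℕ∞) (fun y => u y i) :=
  (contDiff_apply ℝ ℝ i).comp hu

lemma fd_mul {f g : Pt → ℝ} (hf : ContDiff ℝ (⊤ : ℕ∞) f) (hg : ContDiff ℝ (⊤ : ℕ∞) g) (x v : Pt) :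
    fderiv ℝ (fun y => f y * g y) x v
      = fderiv ℝ f x v * g x + f x * fderiv ℝ g x v := by
  rw [fderiv_fun_mul (hf.differentiable (by simp) x) (hg.differentiable (by simp) x)]
  simp [smul_eq_mul]; ring

lemma fd_add {f g : Pt → ℝ} (hf : ContDiff ℝ (⊤ : ℕ∞) f) (hg : ContDiff ℝ (⊤ : ℕ∞) g) (x v : Pt) :
    fderiv ℝ (fun y => f y + g y) x v = fderiv ℝ f x v + fderiv ℝ g x v := by
  rw [fderiv_fun_add (hf.differentiable (by simp) x) (hg.differentiable (by simp) x)]; simp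

lemma fd_sub {f g : Pt → ℝ} (hf : ContDiff ℝ (⊤ : ℕ∞) f) (hg : ContDiff ℝ (⊤ : ℕ∞) g) (x v : Pt) :
    fderiv ℝ (fun y => f y - g y) x v = fderiv ℝ f x v - fderiv ℝ g x v := by
  rw [fderiv_fun_sub (hf.differentiable (by simp) x) (hg.differentiable (by simp) x)]; simp

lemma fd_const (c : ℝ) (x v : Pt) : fderiv ℝ (fun _ : Pt => c) x v = 0 := by
  simp

lemma fd_comm {f : Pt → ℝ} (hf : ContDiff ℝ (⊤ : ℕ∞) f) (x v w : Pt) :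
    fderiv ℝ (fun y => fderiv ℝ f y v) x w = fderiv ℝ (fun y => fderiv ℝ f y w) x v := by
  have hd : DifferentiableAt ℝ (fderiv ℝ f) x :=
    ((hf.fderiv_right (m := (⊤ : ℕ∞)) (by simp)).differentiable (by simp)) x
  have h1 : ∀ v w : Pt, fderiv ℝ (fun y => fderiv ℝ f y v) x w
      = fderiv ℝ (fderiv ℝ f) x w v := by
    intro v w
    rw [fderiv_clm_apply hd (differentiableAt_const v)]
    simp
  have hs := (hf.contDiffAt.of_le (by simpa using (WithTop.coe_le_coe.mpr (le_top : (2 : ℕ∞) ≤ ⊤))) : ContDiffAt ℝ 2 f x).isSymmSndFDerivAt (by norm_num)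
  rw [h1 v w, h1 w v]
  exact hs w v

end Helpers

set_option maxHeartbeats 4000000 in
/-- entropy-type relation for the helicity density
`h_ρ = (ρu)·(ρω)` for the compressible Euler equations:
`∂ₜh_ρ + div J_ρ = σ̃_ρ` with `J_ρ = h_ρ u + P curl(ρu) − ½ρ²|u|² ω` and
`σ̃_ρ = −q ρ |u|² − 2 h_ρ div u`. -/
theorem helicity_entropy_relation_compressible
    (u : Pt → Space) (ρ P : Pt → ℝ)
    (hu : ContDiff ℝ (⊤ : ℕ∞) u) (hρ : ContDiff ℝ (⊤ : ℕ∞) ρ) (hP : ContDiff ℝ (⊤ : ℕ∞) P)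
    (hρpos : ∀ x : Pt, 0 < ρ x)
    (hmom : ∀ x : Pt, ρ x • (tderV u x + adv u u x) = -sgrad P x)
    (hmass : ∀ x : Pt, tder ρ x + dot3 (u x) (sgrad ρ x) + ρ x * sdiv u x = 0)
    (x : Pt) :
    tder (fun y => dot3 (ρ y • u y) (ρ y • scurl u y)) x
      + sdiv (fun y =>
          dot3 (ρ y • u y) (ρ y • scurl u y) • u y
          + P y • scurl (fun z => ρ z • u z) y
          - ((1/2) * (ρ y)^2 * dot3 (u y) (u y)) • scurl u y) x
      = -(dot3 (scurl u x) (sgrad ρ x)) * ρ x * dot3 (u x) (u x)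
        - 2 * dot3 (ρ x • u x) (ρ x • scurl u x) * sdiv u x := by
  have base0 : ∀ y : Pt, ρ y * (fderiv ℝ (fun z => u z 0) y (1, (0 : Space)) + (u y 0 * fderiv ℝ (fun z => u z 0) y (0, Pi.single 0 1) + u y 1 * fderiv ℝ (fun z => u z 0) y (0, Pi.single 1 1) + u y 2 * fderiv ℝ (fun z => u z 0) y (0, Pi.single 2 1))) + fderiv ℝ P y (0, Pi.single 0 1) = 0 := by
    intro y
    have h := congrFun (hmom y) 0
    simp only [tderV, adv, tder, pder, dot3, sgrad, Fin.sum_univ_three, Pi.smul_apply,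
      smul_eq_mul, Pi.add_apply, Pi.neg_apply] at h
    linear_combination h
  have base1 : ∀ y : Pt, ρ y * (fderiv ℝ (fun z => u z 1) y (1, (0 : Space)) + (u y 0 * fderiv ℝ (fun z => u z 1) y (0, Pi.single 0 1) + u y 1 * fderiv ℝ (fun z => u z 1) y (0, Pi.single 1 1) + u y 2 * fderiv ℝ (fun z => u z 1) y (0, Pi.single 2 1))) + fderiv ℝ P y (0, Pi.single 1 1) = 0 := by
    intro y
    have h := congrFun (hmom y) 1
    simp only [tderV, adv, tder, pder, dot3, sgrad, Fin.sum_univ_three, Pi.smul_apply,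
      smul_eq_mul, Pi.add_apply, Pi.neg_apply] at h
    linear_combination h
  have base2 : ∀ y : Pt, ρ y * (fderiv ℝ (fun z => u z 2) y (1, (0 : Space)) + (u y 0 * fderiv ℝ (fun z => u z 2) y (0, Pi.single 0 1) + u y 1 * fderiv ℝ (fun z => u z 2) y (0, Pi.single 1 1) + u y 2 * fderiv ℝ (fun z => u z 2) y (0, Pi.single 2 1))) + fderiv ℝ P y (0, Pi.single 2 1) = 0 := by
    intro y
    have h := congrFun (hmom y) 2
    simp only [tderV, adv, tder, pder, dot3, sgrad, Fin.sum_univ_three, Pi.smul_apply,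
      smul_eq_mul, Pi.add_apply, Pi.neg_apply] at h
    linear_combination h
  have hMO0 := base0 x
  have hMO1 := base1 x
  have hMO2 := base2 x
  have hD00 : fderiv ℝ (fun y : Pt => ρ y * (fderiv ℝ (fun z => u z 0) y (1, (0 : Space)) + (u y 0 * fderiv ℝ (fun z => u z 0) y (0, Pi.single 0 1) + u y 1 * fderiv ℝ (fun z => u z 0) y (0, Pi.single 1 1) + u y 2 * fderiv ℝ (fun z => u z 0) y (0, Pi.single 2 1))) + fderiv ℝ P y (0, Pi.single 0 1)) x (0, Pi.single 0 1) = 0 := by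
    rw [funext base0]
    exact fd_const 0 x _
  have hD01 : fderiv ℝ (fun y : Pt => ρ y * (fderiv ℝ (fun z => u z 0) y (1, (0 : Space)) + (u y 0 * fderiv ℝ (fun z => u z 0) y (0, Pi.single 0 1) + u y 1 * fderiv ℝ (fun z => u z 0) y (0, Pi.single 1 1) + u y 2 * fderiv ℝ (fun z => u z 0) y (0, Pi.single 2 1))) + fderiv ℝ P y (0, Pi.single 0 1)) x (0, Pi.single 1 1) = 0 := by
    rw [funext base0]
    exact fd_const 0 x _
  have hD02 : fderiv ℝ (fun y : Pt => ρ y * (fderiv ℝ (fun z => u z 0) y (1, (0 : Space)) + (u y 0 * fderiv ℝ (fun z => u z 0) y (0, Pi.single 0 1) + u y 1 * fderiv ℝ (fun z => u z 0) y (0, Pi.single 1 1) + u y 2 * fderiv ℝ (fun z => u z 0) y (0, Pi.single 2 1))) + fderiv ℝ P y (0, Pi.single 0 1)) x (0, Pi.single 2 1) = 0 := by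
    rw [funext base0]
    exact fd_const 0 x _
  have hD10 : fderiv ℝ (fun y : Pt => ρ y * (fderiv ℝ (fun z => u z 1) y (1, (0 : Space)) + (u y 0 * fderiv ℝ (fun z => u z 1) y (0, Pi.single 0 1) + u y 1 * fderiv ℝ (fun z => u z 1) y (0, Pi.single 1 1) + u y 2 * fderiv ℝ (fun z => u z 1) y (0, Pi.single 2 1))) + fderiv ℝ P y (0, Pi.single 1 1)) x (0, Pi.single 0 1) = 0 := by
    rw [funext base1]
    exact fd_const 0 x _
  have hD11 : fderiv ℝ (fun y : Pt => ρ y * (fderiv ℝ (fun z => u z 1) y (1, (0 : Space)) + (u y 0 * fderiv ℝ (fun z => u z 1) y (0, Pi.single 0 1) + u y 1 * fderiv ℝ (fun z => u z 1) y (0, Pi.single 1 1) + u y 2 * fderiv ℝ (fun z => u z 1) y (0, Pi.single 2 1))) + fderiv ℝ P y (0, Pi.single 1 1)) x (0, Pi.single 1 1) = 0 := by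
    rw [funext base1]
    exact fd_const 0 x _
  have hD12 : fderiv ℝ (fun y : Pt => ρ y * (fderiv ℝ (fun z => u z 1) y (1, (0 : Space)) + (u y 0 * fderiv ℝ (fun z => u z 1) y (0, Pi.single 0 1) + u y 1 * fderiv ℝ (fun z => u z 1) y (0, Pi.single 1 1) + u y 2 * fderiv ℝ (fun z => u z 1) y (0, Pi.single 2 1))) + fderiv ℝ P y (0, Pi.single 1 1)) x (0, Pi.single 2 1) = 0 := by
    rw [funext base1]
    exact fd_const 0 x _
  have hD20 : fderiv ℝ (fun y : Pt => ρ y * (fderiv ℝ (fun z => u z 2) y (1, (0 : Space)) + (u y 0 * fderiv ℝ (fun z => u z 2) y (0, Pi.single 0 1) + u y 1 * fderiv ℝ (fun z => u z 2) y (0, Pi.single 1 1) + u y 2 * fderiv ℝ (fun z => u z 2) y (0, Pi.single 2 1))) + fderiv ℝ P y (0, Pi.single 2 1)) x (0, Pi.single 0 1) = 0 := by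
    rw [funext base2]
    exact fd_const 0 x _
  have hD21 : fderiv ℝ (fun y : Pt => ρ y * (fderiv ℝ (fun z => u z 2) y (1, (0 : Space)) + (u y 0 * fderiv ℝ (fun z => u z 2) y (0, Pi.single 0 1) + u y 1 * fderiv ℝ (fun z => u z 2) y (0, Pi.single 1 1) + u y 2 * fderiv ℝ (fun z => u z 2) y (0, Pi.single 2 1))) + fderiv ℝ P y (0, Pi.single 2 1)) x (0, Pi.single 1 1) = 0 := by
    rw [funext base2]
    exact fd_const 0 x _
  have hD22 : fderiv ℝ (fun y : Pt => ρ y * (fderiv ℝ (fun z => u z 2) y (1, (0 : Space)) + (u y 0 * fderiv ℝ (fun z => u z 2) y (0, Pi.single 0 1) + u y 1 * fderiv ℝ (fun z => u z 2) y (0, Pi.single 1 1) + u y 2 * fderiv ℝ (fun z => u z 2) y (0, Pi.single 2 1))) + fderiv ℝ P y (0, Pi.single 2 1)) x (0, Pi.single 2 1) = 0 := by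
    rw [funext base2]
    exact fd_const 0 x _
  have hMA := hmass x
  simp only [tder, pder, dot3, sgrad, sdiv, Fin.sum_univ_three] at hMA
  simp (disch := fun_prop) only [fd_mul, fd_add, fd_sub, fd_const] at hD00 hD01 hD02 hD10 hD11 hD12 hD20 hD21 hD22
  simp only [tder, pder, sdiv, scurl, dot3, sgrad, Fin.sum_univ_three,
    Matrix.cons_val_zero, Matrix.cons_val_one, Matrix.head_cons, Matrix.cons_val_two,
    Matrix.tail_cons, Pi.smul_apply, smul_eq_mul, Pi.add_apply, Pi.sub_apply, pow_two]
  simp (disch := fun_prop) only [fd_mul, fd_add, fd_sub, fd_const]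
  linear_combination
      ((-1 : ℝ) * (ρ x) * (u x 2)) * hD01
      + ((1 : ℝ) * (ρ x) * (u x 1)) * hD02
      + ((1 : ℝ) * (ρ x) * (u x 2)) * hD10
      + ((-1 : ℝ) * (ρ x) * (u x 0)) * hD12
      + ((-1 : ℝ) * (ρ x) * (u x 1)) * hD20
      + ((1 : ℝ) * (ρ x) * (u x 0)) * hD21
      + ((-2 : ℝ) * (fderiv ℝ (fun y => u y 0) x (0, Pi.single 1 1)) * (ρ x) * (u x 2) + (2 : ℝ) * (fderiv ℝ (fun y => u y 0) x (0, Pi.single 2 1)) * (ρ x) * (u x 1) + (2 : ℝ) * (fderiv ℝ (fun y => u y 1) x (0, Pi.single 0 1)) * (ρ x) * (u x 2) + (-2 : ℝ) * (fderiv ℝ (fun y => u y 1) x (0, Pi.single 2 1)) * (ρ x) * (u x 0) + (-2 : ℝ) * (fderiv ℝ (fun y => u y 2) x (0, Pi.single 0 1)) * (ρ x) * (u x 1) + (2 : ℝ) * (fderiv ℝ (fun y => u y 2) x (0, Pi.single 1 1)) * (ρ x) * (u x 0)) * hMA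
      + ((1 : ℝ) * (fderiv ℝ ρ x (0, Pi.single 1 1)) * (u x 2) + (-1 : ℝ) * (fderiv ℝ ρ x (0, Pi.single 2 1)) * (u x 1) + (-1 : ℝ) * (fderiv ℝ (fun y => u y 1) x (0, Pi.single 2 1)) * (ρ x) + (1 : ℝ) * (fderiv ℝ (fun y => u y 2) x (0, Pi.single 1 1)) * (ρ x)) * hMO0
      + ((-1 : ℝ) * (fderiv ℝ ρ x (0, Pi.single 0 1)) * (u x 2) + (1 : ℝ) * (fderiv ℝ ρ x (0, Pi.single 2 1)) * (u x 0) + (1 : ℝ) * (fderiv ℝ (fun y => u y 0) x (0, Pi.single 2 1)) * (ρ x) + (-1 : ℝ) * (fderiv ℝ (fun y => u y 2) x (0, Pi.single 0 1)) * (ρ x)) * hMO1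
      + ((1 : ℝ) * (fderiv ℝ ρ x (0, Pi.single 0 1)) * (u x 1) + (-1 : ℝ) * (fderiv ℝ ρ x (0, Pi.single 1 1)) * (u x 0) + (-1 : ℝ) * (fderiv ℝ (fun y => u y 0) x (0, Pi.single 1 1)) * (ρ x) + (1 : ℝ) * (fderiv ℝ (fun y => u y 1) x (0, Pi.single 0 1)) * (ρ x)) * hMO2
      + ((-1 : ℝ) * (ρ x) * (u x 2)) * (fd_comm hP x (0, Pi.single 1 1) (0, Pi.single 0 1))
      + ((1 : ℝ) * (ρ x) * (u x 1)) * (fd_comm hP x (0, Pi.single 2 1) (0, Pi.single 0 1))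
      + ((-1 : ℝ) * (ρ x) * (u x 0)) * (fd_comm hP x (0, Pi.single 2 1) (0, Pi.single 1 1))
      + ((1 : ℝ) * (P x) * (u x 2)) * (fd_comm hρ x (0, Pi.single 1 1) (0, Pi.single 0 1))
      + ((-1 : ℝ) * (P x) * (u x 1)) * (fd_comm hρ x (0, Pi.single 2 1) (0, Pi.single 0 1))
      + ((1 : ℝ) * (P x) * (u x 0)) * (fd_comm hρ x (0, Pi.single 2 1) (0, Pi.single 1 1))
      + ((-1 : ℝ) * (ρ x) * (ρ x) * (u x 0) * (u x 2)) * (fd_comm (sm_comp hu 0) x (0, Pi.single 1 1) (0, Pi.single 0 1))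
      + ((1 : ℝ) * (ρ x) * (ρ x) * (u x 0) * (u x 1)) * (fd_comm (sm_comp hu 0) x (0, Pi.single 2 1) (0, Pi.single 0 1))
      + ((1 : ℝ) * (P x) * (ρ x) + (-1/2 : ℝ) * (ρ x) * (ρ x) * (u x 0) * (u x 0) + (1/2 : ℝ) * (ρ x) * (ρ x) * (u x 1) * (u x 1) + (1/2 : ℝ) * (ρ x) * (ρ x) * (u x 2) * (u x 2)) * (fd_comm (sm_comp hu 0) x (0, Pi.single 2 1) (0, Pi.single 1 1))
      + ((-1 : ℝ) * (ρ x) * (ρ x) * (u x 2)) * (fd_comm (sm_comp hu 0) x (0, Pi.single 1 1) (1, (0 : Space)))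
      + ((1 : ℝ) * (ρ x) * (ρ x) * (u x 1)) * (fd_comm (sm_comp hu 0) x (0, Pi.single 2 1) (1, (0 : Space)))
      + ((-1 : ℝ) * (ρ x) * (ρ x) * (u x 1) * (u x 2)) * (fd_comm (sm_comp hu 1) x (0, Pi.single 1 1) (0, Pi.single 0 1))
      + ((-1 : ℝ) * (P x) * (ρ x) + (-1/2 : ℝ) * (ρ x) * (ρ x) * (u x 0) * (u x 0) + (1/2 : ℝ) * (ρ x) * (ρ x) * (u x 1) * (u x 1) + (-1/2 : ℝ) * (ρ x) * (ρ x) * (u x 2) * (u x 2)) * (fd_comm (sm_comp hu 1) x (0, Pi.single 2 1) (0, Pi.single 0 1))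
      + ((-1 : ℝ) * (ρ x) * (ρ x) * (u x 0) * (u x 1)) * (fd_comm (sm_comp hu 1) x (0, Pi.single 2 1) (0, Pi.single 1 1))
      + ((1 : ℝ) * (ρ x) * (ρ x) * (u x 2)) * (fd_comm (sm_comp hu 1) x (0, Pi.single 0 1) (1, (0 : Space)))
      + ((-1 : ℝ) * (ρ x) * (ρ x) * (u x 0)) * (fd_comm (sm_comp hu 1) x (0, Pi.single 2 1) (1, (0 : Space)))
      + ((1 : ℝ) * (P x) * (ρ x) + (1/2 : ℝ) * (ρ x) * (ρ x) * (u x 0) * (u x 0) + (1/2 : ℝ) * (ρ x) * (ρ x) * (u x 1) * (u x 1) + (-1/2 : ℝ) * (ρ x) * (ρ x) * (u x 2) * (u x 2)) * (fd_comm (sm_comp hu 2) x (0, Pi.single 1 1) (0, Pi.single 0 1))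
      + ((1 : ℝ) * (ρ x) * (ρ x) * (u x 1) * (u x 2)) * (fd_comm (sm_comp hu 2) x (0, Pi.single 2 1) (0, Pi.single 0 1))
      + ((-1 : ℝ) * (ρ x) * (ρ x) * (u x 0) * (u x 2)) * (fd_comm (sm_comp hu 2) x (0, Pi.single 2 1) (0, Pi.single 1 1))
      + ((-1 : ℝ) * (ρ x) * (ρ x) * (u x 1)) * (fd_comm (sm_comp hu 2) x (0, Pi.single 0 1) (1, (0 : Space)))
      + ((1 : ℝ) * (ρ x) * (ρ x) * (u x 0)) * (fd_comm (sm_comp hu 2) x (0, Pi.single 1 1) (1, (0 : Space)))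
end
end

section
/- Let u, B : ℝ × ℝ³ → ℝ³ and ρ, P : ℝ × ℝ³ → ℝ be smooth with ρ > 0 everywhere, satisfying ρ(∂ₜu + (u·∇)u) = (curl B) × B − ∇P, ∂ₜρ + u·∇ρ + ρ div u = 0, ∂ₜB = curl(u × B), and div B = 0. Then the cross-helicity density h_c = ρ u·B satisfies the pointwise entropy-type relation ∂ₜh_c + div J_c = σ_c, where J_c = h_c u + P B − ½ ρ |u|² B and σ_c = −½ q_c |u|² − h_c div u, with q_c = B·∇ρ. -/
open MeasureTheory

noncomputable section

lemma dmul (f g : Pt → ℝ) (x v : Pt) (hf : DifferentiableAt ℝ f x)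
    (hg : DifferentiableAt ℝ g x) :
    fderiv ℝ (fun y => f y * g y) x v
      = fderiv ℝ f x v * g x + f x * fderiv ℝ g x v := by
  rw [fderiv_fun_mul hf hg]
  simp only [ContinuousLinearMap.add_apply, ContinuousLinearMap.smul_apply, smul_eq_mul]
  ring

lemma dadd (f g : Pt → ℝ) (x v : Pt) (hf : DifferentiableAt ℝ f x)
    (hg : DifferentiableAt ℝ g x) :
    fderiv ℝ (fun y => f y + g y) x v = fderiv ℝ f x v + fderiv ℝ g x v := by
  rw [fderiv_fun_add hf hg]; rfl

lemma dsub (f g : Pt → ℝ) (x v : Pt) (hf : DifferentiableAt ℝ f x)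
    (hg : DifferentiableAt ℝ g x) :
    fderiv ℝ (fun y => f y - g y) x v = fderiv ℝ f x v - fderiv ℝ g x v := by
  rw [fderiv_fun_sub hf hg]; rfl

lemma dconstmul (c : ℝ) (f : Pt → ℝ) (x v : Pt) (hf : DifferentiableAt ℝ f x) :
    fderiv ℝ (fun y => c * f y) x v = c * fderiv ℝ f x v := by
  rw [fderiv_const_mul hf]; rfl

/-- entropy-type relation for the cross-helicity density
`h_c = ρ u·B` for ideal compressible MHD: `∂ₜh_c + div J_c = σ_c` with
`J_c = h_c u + P B − ½ρ|u|² B` and `σ_c = −½ q_c |u|² − h_c div u`. -/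
theorem cross_helicity_entropy_relation_mhd
    (u B : Pt → Space) (ρ P : Pt → ℝ)
    (hu : ContDiff ℝ (⊤ : ℕ∞) u) (hB : ContDiff ℝ (⊤ : ℕ∞) B) (hρ : ContDiff ℝ (⊤ : ℕ∞) ρ)
    (hP : ContDiff ℝ (⊤ : ℕ∞) P)
    (hρpos : ∀ x : Pt, 0 < ρ x)
    (hmom : ∀ x : Pt, ρ x • (tderV u x + adv u u x)
      = cross3 (scurl B x) (B x) - sgrad P x)
    (hmass : ∀ x : Pt, tder ρ x + dot3 (u x) (sgrad ρ x) + ρ x * sdiv u x = 0)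
    (hind : ∀ x : Pt, tderV B x = scurl (fun y => cross3 (u y) (B y)) x)
    (hdivB : ∀ x : Pt, sdiv B x = 0)
    (x : Pt) :
    tder (fun y => ρ y * dot3 (u y) (B y)) x
      + sdiv (fun y => (ρ y * dot3 (u y) (B y)) • u y + P y • B y
          - ((1/2) * ρ y * dot3 (u y) (u y)) • B y) x
      = -(1/2) * dot3 (B x) (sgrad ρ x) * dot3 (u x) (u x)
        - ρ x * dot3 (u x) (B x) * sdiv u x := by
  have hdu : Differentiable ℝ u := hu.differentiable (by simp)
  have hdB : Differentiable ℝ B := hB.differentiable (by simp)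
  have hdρ : Differentiable ℝ ρ := hρ.differentiable (by simp)
  have hdP : Differentiable ℝ P := hP.differentiable (by simp)
  have hm0 := congrFun (hmom x) 0
  have hm1 := congrFun (hmom x) 1
  have hm2 := congrFun (hmom x) 2
  have hi0 := congrFun (hind x) 0
  have hi1 := congrFun (hind x) 1
  have hi2 := congrFun (hind x) 2
  have hms := hmass x
  have hdb := hdivB x
  simp only [tder, pder, tderV, adv, sgrad, sdiv, scurl, dot3, cross3,
    Fin.sum_univ_three, Pi.smul_apply, Pi.add_apply, Pi.sub_apply, smul_eq_mul,
    Matrix.cons_val_zero, Matrix.cons_val_one, Matrix.head_cons,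
    Matrix.cons_val_two, Matrix.tail_cons] at hm0 hm1 hm2 hi0 hi1 hi2 hms hdb ⊢
  simp (disch := fun_prop) only [dmul, dadd, dsub, dconstmul, fderiv_fun_const,
    Pi.zero_apply, ContinuousLinearMap.zero_apply] at hm0 hm1 hm2 hi0 hi1 hi2 ⊢
  linear_combination (u x 0 * B x 0 + u x 1 * B x 1 + u x 2 * B x 2) * hms
    + B x 0 * hm0 + B x 1 * hm1 + B x 2 * hm2
    + ρ x * u x 0 * hi0 + ρ x * u x 1 * hi1 + ρ x * u x 2 * hi2
    + (P x + 1/2 * ρ x * (u x 0 * u x 0 + u x 1 * u x 1 + u x 2 * u x 2)) * hdb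
end
end
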